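/- arXiv:1601.07091 — 8 statements merged into one kernel-verified Lean document; each statement's English description precedes it below -/
import Mathlib

section
/- Let A(1,1:l),…,A(m,1:l) be i.i.d. random vectors in 𝒜^l with law p_{A^l}, and let Λ_1,…,Λ_m be permutations of {1,…,l} chosen uniformly and independently (also independent of the A's). Define B(t,i) = A(t,Λ_t(i)). Then for every fixed i in {1,…,l}, the vector (B(1,i),…,B(m,i)) is distributed according to the product measure ∏_{t=1}^m (1/l)∑_{j=1}^l p_{A_j}, i.e., the l interleaved columns are identically distributed with i.i.d. entries of law (1/l)∑_{j=1}^l p_{A_j}. -/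
/-!
Since `∑ σ, f (σ i)` does not depend on `i`, a uniform permutation sends any fixed coordinate
to a uniform one; so for a single row the entry in column `i` has law `(1/l) ∑ⱼ p_{A_j}`.
The joint weight of `(A, Λ)` is a product over the rows, hence the sum over all `(A, Λ)`
factorizes into the product of these single-row laws.
-/

open Finset

namespace Equiv.Perm

variable {ι : Type*} [Fintype ι] [DecidableEq ι]

theorem sum_comp_apply_eq {M : Type*} [AddCommMonoid M] (f : ι → M) (i k : ι) :
    ∑ σ : Perm ι, f (σ i) = ∑ σ : Perm ι, f (σ k) :=
  Fintype.sum_equiv (Equiv.mulRight (swap i k)) _ _ fun σ => by simp [mul_apply]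

theorem card_smul_sum_comp_apply {M : Type*} [AddCommMonoid M] (f : ι → M) (i : ι) :
    Fintype.card ι • ∑ σ : Perm ι, f (σ i) = (Fintype.card ι).factorial • ∑ j, f j :=
  calc Fintype.card ι • ∑ σ : Perm ι, f (σ i)
      = ∑ k : ι, ∑ σ : Perm ι, f (σ k) := by
        rw [← card_univ, ← sum_const]
        exact sum_congr rfl fun k _ => sum_comp_apply_eq f i k
    _ = ∑ _σ : Perm ι, ∑ j, f j := by
        rw [sum_comm]
        exact sum_congr rfl fun σ _ => Equiv.sum_comp σ f
    _ = (Fintype.card ι).factorial • ∑ j, f j := by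
        rw [sum_const, card_univ, Fintype.card_perm]

theorem inv_factorial_mul_sum_comp_apply {K : Type*} [Field K] [CharZero K] (f : ι → K) (i : ι) :
    1 / ((Fintype.card ι).factorial : K) * ∑ σ : Perm ι, f (σ i) =
      1 / (Fintype.card ι : K) * ∑ j, f j := by
  have hcard : (Fintype.card ι : K) ≠ 0 :=
    Nat.cast_ne_zero.mpr (Fintype.card_pos_iff.mpr ⟨i⟩).ne'
  have hfact : ((Fintype.card ι).factorial : K) ≠ 0 :=
    Nat.cast_ne_zero.mpr (Nat.factorial_ne_zero _)
  have h := card_smul_sum_comp_apply f i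
  rw [nsmul_eq_mul, nsmul_eq_mul] at h
  field_simp
  linear_combination h

end Equiv.Perm

theorem Fintype.sum_sum_prod_eq_prod_sum_sum {ι β γ R : Type*} [Fintype ι] [DecidableEq ι]
    [Fintype β] [Fintype γ] [CommSemiring R] (F : ι → β → γ → R) :
    ∑ x : ι → β, ∑ y : ι → γ, ∏ t, F t (x t) (y t) = ∏ t, ∑ b, ∑ c, F t b c := by
  simp only [Fintype.prod_sum]

theorem sum_sum_perm_mul_ite_apply_eq {ι α : Type*} [Fintype ι] [DecidableEq ι] [Fintype α]
    [DecidableEq α] (p : (ι → α) → ℝ) (i : ι) (a : α) :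
    ∑ v : ι → α, ∑ σ : Equiv.Perm ι,
        p v * (1 / ((Fintype.card ι).factorial : ℝ)) * (if v (σ i) = a then 1 else 0) =
      1 / (Fintype.card ι : ℝ) * ∑ j, ∑ v : ι → α, if v j = a then p v else 0 := by
  calc _ = ∑ v : ι → α, p v * (1 / (Fintype.card ι : ℝ) * ∑ j, if v j = a then 1 else 0) := by
        refine sum_congr rfl fun v _ => ?_
        rw [← Equiv.Perm.inv_factorial_mul_sum_comp_apply _ i, mul_sum, mul_sum]
        simp only [mul_assoc]
    _ = _ := by
        simp only [mul_sum]
        rw [sum_comm]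
        refine sum_congr rfl fun j _ => sum_congr rfl fun v _ => ?_
        split_ifs <;> ring

theorem stmt_2_general {α : Type*} [Fintype α] [DecidableEq α] (l m : ℕ)
    (p : (Fin l → α) → ℝ)
    (q : α → ℝ)
    (hq : ∀ a : α,
      q a = (1 / (l : ℝ)) * ∑ j : Fin l, ∑ v : Fin l → α, if v j = a then p v else 0)
    (i : Fin l) (b : Fin m → α) :
    ∑ A : Fin m → Fin l → α, ∑ Λ : Fin m → Equiv.Perm (Fin l),
        ((∏ t, p (A t)) * (1 / (Nat.factorial l : ℝ)) ^ m) *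
          (if (fun t => A t (Λ t i)) = b then 1 else 0)
      = ∏ t, q (b t) := by
  have hsummand : ∀ (A : Fin m → Fin l → α) (Λ : Fin m → Equiv.Perm (Fin l)),
      ((∏ t, p (A t)) * (1 / (l.factorial : ℝ)) ^ m) *
          (if (fun t => A t (Λ t i)) = b then 1 else 0) =
        ∏ t, p (A t) * (1 / (l.factorial : ℝ)) * (if A t (Λ t i) = b t then 1 else 0) := by
    intro A Λ
    rw [prod_mul_distrib, prod_mul_distrib, prod_const, card_univ, Fintype.card_fin,
      Fintype.prod_boole]
    congr 1
    simp only [funext_iff]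
    congr
  simp only [hsummand]
  rw [Fintype.sum_sum_prod_eq_prod_sum_sum
    (fun t (v : Fin l → α) (σ : Equiv.Perm (Fin l)) =>
      p v * (1 / (l.factorial : ℝ)) * (if v (σ i) = b t then 1 else 0))]
  refine prod_congr rfl fun t _ => ?_
  simpa only [hq, Fintype.card_fin] using sum_sum_perm_mul_ite_apply_eq p i (b t)

/-- Interleaving: rows `A(1,·),…,A(m,·)` i.i.d. with law `p` on `α^l`, and `Λ₁,…,Λ_m`
uniform independent permutations of `{1,…,l}` (independent of the rows).  With
`B(t,i) = A(t, Λ_t(i))`, for every fixed column `i` the vector `(B(1,i),…,B(m,i))` is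
distributed as the product `∏_t q` where `q = (1/l)∑_j p_{A_j}`. -/
theorem stmt_2 {α : Type*} [Fintype α] [DecidableEq α] (l m : ℕ) (hl : 0 < l)
    (p : (Fin l → α) → ℝ) (hp0 : ∀ v, 0 ≤ p v) (hp1 : ∑ v, p v = 1)
    (q : α → ℝ)
    (hq : ∀ a : α,
      q a = (1 / (l : ℝ)) * ∑ j : Fin l, ∑ v : Fin l → α, if v j = a then p v else 0)
    (i : Fin l) (b : Fin m → α) :
    ∑ A : Fin m → Fin l → α, ∑ Λ : Fin m → Equiv.Perm (Fin l),
        ((∏ t, p (A t)) * (1 / (Nat.factorial l : ℝ)) ^ m) *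
          (if (fun t => A t (Λ t i)) = b then 1 else 0)
      = ∏ t, q (b t) :=
  stmt_2_general l m p q hq i b
end

section
/- Let U_1, U_2 be independent random variables on a finite alphabet 𝒰 with |𝒰| = a, and let Y_0 be defined by Y_0 = U_1 if U_1 = U_2 and Y_0 = 0 otherwise. Then H(Y_0) ≤ log 2 + (3/4)·log a. -/
open Finset

lemma jensen_negMulLog {ι : Type*} (s : Finset ι) (f : ι → ℝ)
    (hf : ∀ i ∈ s, 0 ≤ f i) :
    ∑ i ∈ s, Real.negMulLog (f i) ≤
      Real.negMulLog (∑ i ∈ s, f i) + (∑ i ∈ s, f i) * Real.log s.card := by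
  rcases s.eq_empty_or_nonempty with rfl | hs
  · simp
  have hn : (0:ℝ) < s.card := by exact_mod_cast Finset.card_pos.mpr hs
  have ht0 : 0 ≤ ∑ i ∈ s, f i := Finset.sum_nonneg hf
  have hJ : ∑ i ∈ s, (s.card : ℝ)⁻¹ • Real.negMulLog (f i) ≤
      Real.negMulLog (∑ i ∈ s, (s.card : ℝ)⁻¹ • f i) := by
    apply Real.concaveOn_negMulLog.le_map_sum
    · intro i _; positivity
    · rw [Finset.sum_const, nsmul_eq_mul]; field_simp
    · intro i hi; exact hf i hi
  rw [← Finset.smul_sum, ← Finset.smul_sum, smul_eq_mul, smul_eq_mul] at hJ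
  set t := ∑ i ∈ s, f i with ht
  have key : (s.card : ℝ) * Real.negMulLog ((s.card:ℝ)⁻¹ * t)
      = Real.negMulLog t + t * Real.log s.card := by
    rcases eq_or_lt_of_le ht0 with h | h
    · rw [← h]; simp
    · rw [Real.negMulLog, Real.negMulLog,
        Real.log_mul (by positivity) (ne_of_gt h), Real.log_inv]
      field_simp
      ring
  calc ∑ i ∈ s, Real.negMulLog (f i)
      = (s.card : ℝ) * ((s.card : ℝ)⁻¹ * ∑ i ∈ s, Real.negMulLog (f i)) := by
        field_simp
    _ ≤ (s.card : ℝ) * Real.negMulLog ((s.card:ℝ)⁻¹ * t) :=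
        mul_le_mul_of_nonneg_left hJ (le_of_lt hn)
    _ = Real.negMulLog t + t * Real.log s.card := key

lemma entropy_bound (a : ℕ) (r : Fin a → ℝ) (hr0 : ∀ y, 0 ≤ r y)
    (hr1 : ∑ y, r y = 1) (y₀ : Fin a) (hy : 1/4 ≤ r y₀) :
    ∑ y, Real.negMulLog (r y) ≤ Real.log 2 + (3/4) * Real.log (a:ℝ) := by
  have ha : 0 < a := y₀.pos
  have hsplit : r y₀ + ∑ y ∈ univ.erase y₀, r y = ∑ y, r y :=
    Finset.add_sum_erase _ _ (mem_univ y₀)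
  have htdef : ∑ y ∈ univ.erase y₀, r y = 1 - r y₀ := by rw [hr1] at hsplit; linarith
  have hcard : ((univ.erase y₀).card : ℝ) = ((a - 1 : ℕ) : ℝ) := by
    rw [Finset.card_erase_of_mem (mem_univ y₀), Finset.card_univ, Fintype.card_fin]
  have hJ := jensen_negMulLog (univ.erase y₀) r (fun i _ => hr0 i)
  rw [htdef, hcard] at hJ
  have hbin : Real.negMulLog (r y₀) + Real.negMulLog (1 - r y₀) ≤ Real.log 2 := by
    rw [← Real.binEntropy_eq_negMulLog_add_negMulLog_one_sub]
    exact Real.binEntropy_le_log_two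
  have ht34 : 1 - r y₀ ≤ 3/4 := by linarith
  have ht0 : 0 ≤ 1 - r y₀ := htdef ▸ Finset.sum_nonneg (fun i _ => hr0 i)
  have hlog : (1 - r y₀) * Real.log ((a - 1 : ℕ) : ℝ) ≤ 3/4 * Real.log (a:ℝ) := by
    rcases Nat.lt_or_ge a 2 with h | h
    · have : a = 1 := by omega
      subst this
      norm_num
    · have h1 : (0:ℝ) ≤ Real.log ((a - 1 : ℕ) : ℝ) := by
        apply Real.log_nonneg
        have : (1:ℕ) ≤ a - 1 := by omega
        exact_mod_cast this
      have h2 : Real.log ((a - 1 : ℕ) : ℝ) ≤ Real.log (a:ℝ) := by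
        have hpos : (0:ℝ) < ((a - 1 : ℕ) : ℝ) := by
          have : (1:ℕ) ≤ a - 1 := by omega
          exact_mod_cast Nat.lt_of_lt_of_le Nat.zero_lt_one this
        apply Real.log_le_log hpos
        exact_mod_cast Nat.sub_le a 1
      calc (1 - r y₀) * Real.log ((a - 1 : ℕ) : ℝ)
          ≤ 3/4 * Real.log ((a - 1 : ℕ) : ℝ) := mul_le_mul_of_nonneg_right ht34 h1
        _ ≤ 3/4 * Real.log (a:ℝ) := by linarith
  calc ∑ y, Real.negMulLog (r y)
      = Real.negMulLog (r y₀) + ∑ y ∈ univ.erase y₀, Real.negMulLog (r y) :=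
        (Finset.add_sum_erase _ _ (mem_univ y₀)).symm
    _ ≤ Real.negMulLog (r y₀) + (Real.negMulLog (1 - r y₀)
          + (1 - r y₀) * Real.log ((a - 1 : ℕ) : ℝ)) := by linarith
    _ ≤ Real.log 2 + (3/4) * Real.log (a:ℝ) := by linarith

/-- Dueck's shared-channel output entropy bound: if `U₁, U₂` are independent on an
alphabet of size `a` and `Y₀ = U₁` when `U₁ = U₂` and `Y₀ = 0` otherwise, then
`H(Y₀) ≤ log 2 + (3/4)·log a`. -/
theorem stmt_6 (a : ℕ) (ha : 0 < a)
    (p q : Fin a → ℝ)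
    (hp0 : ∀ u, 0 ≤ p u) (hp1 : ∑ u, p u = 1)
    (hq0 : ∀ u, 0 ≤ q u) (hq1 : ∑ u, q u = 1)
    (r : Fin a → ℝ)
    (hr : ∀ y, r y = ∑ u1, ∑ u2,
      p u1 * q u2 * (if (if u1 = u2 then u1 else (⟨0, ha⟩ : Fin a)) = y then 1 else 0)) :
    ∑ y, Real.negMulLog (r y) ≤ Real.log 2 + (3 / 4) * Real.log (a : ℝ) := by
  set z : Fin a := ⟨0, ha⟩ with hz
  -- nonnegativity of r
  have hr0 : ∀ y, 0 ≤ r y := by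
    intro y
    rw [hr]
    apply Finset.sum_nonneg; intro u1 _
    apply Finset.sum_nonneg; intro u2 _
    have : (0:ℝ) ≤ (if (if u1 = u2 then u1 else z) = y then (1:ℝ) else 0) := by
      split_ifs <;> norm_num
    exact mul_nonneg (mul_nonneg (hp0 u1) (hq0 u2)) this
  -- total mass one
  have hpq1 : ∑ u1, ∑ u2, p u1 * q u2 = 1 := by
    simp_rw [← Finset.mul_sum, hq1, mul_one, hp1]
  have hr1 : ∑ y, r y = 1 := by
    simp_rw [hr]
    rw [Finset.sum_comm]
    refine Eq.trans (Finset.sum_congr rfl fun u1 _ => Finset.sum_comm) ?_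
    simp only [mul_ite, mul_one, mul_zero, Finset.sum_ite_eq, Finset.mem_univ, if_true]
    exact hpq1
  have hnn : ∀ u1 u2 y : Fin a,
      (0:ℝ) ≤ p u1 * q u2 * (if (if u1 = u2 then u1 else z) = y then 1 else 0) := by
    intro u1 u2 y
    have : (0:ℝ) ≤ (if (if u1 = u2 then u1 else z) = y then (1:ℝ) else 0) := by
      split_ifs <;> norm_num
    exact mul_nonneg (mul_nonneg (hp0 u1) (hq0 u2)) this
  have hubp : ∀ u, p u ≤ 1 := by
    intro u
    have h := Finset.single_le_sum (f := p) (fun i _ => hp0 i) (Finset.mem_univ u)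
    rw [hp1] at h; exact h
  have hubq : ∀ u, q u ≤ 1 := by
    intro u
    have h := Finset.single_le_sum (f := q) (fun i _ => hq0 i) (Finset.mem_univ u)
    rw [hq1] at h; exact h
  have hheavy : ∃ y₀, 1/4 ≤ r y₀ := by
    by_cases hcase : ∃ u, 1/2 ≤ p u ∧ 1/2 ≤ q u
    · obtain ⟨u, hu1, hu2⟩ := hcase
      refine ⟨u, ?_⟩
      have step1 : p u * q u
          ≤ ∑ u2, p u * q u2 * (if (if u = u2 then u else z) = u then 1 else 0) := by
        have h := Finset.single_le_sum
          (f := fun u2 => p u * q u2 * (if (if u = u2 then u else z) = u then 1 else 0))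
          (fun i _ => hnn u i u) (Finset.mem_univ u)
        simpa using h
      have step2 : (∑ u2, p u * q u2 * (if (if u = u2 then u else z) = u then 1 else 0))
          ≤ r u := by
        rw [hr]
        exact Finset.single_le_sum
          (fun i (_ : i ∈ univ) => Finset.sum_nonneg fun j _ => hnn i j u)
          (Finset.mem_univ u)
      nlinarith [hp0 u, hq0 u]
    · push_neg at hcase
      refine ⟨z, ?_⟩
      have hmin : ∀ u, p u * q u ≤ min (p u) (q u) := by
        intro u
        rcases le_total (p u) (q u) with h | h
        · rw [min_eq_left h]; nlinarith [hubq u, hp0 u]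
        · rw [min_eq_right h]; nlinarith [hubp u, hq0 u]
      have hmax : ∀ u, p u * q u ≤ (1/2) * (p u + q u - min (p u) (q u)) := by
        intro u
        rcases le_total (p u) (q u) with h | h
        · rw [min_eq_left h]
          have hp : p u < 1/2 := by
            by_contra h'
            push_neg at h'
            have := hcase u h'
            linarith
          nlinarith [hq0 u]
        · rw [min_eq_right h]
          have hq : q u < 1/2 := by
            rcases lt_or_ge (p u) (1/2) with h' | h'
            · linarith
            · exact hcase u h'
          nlinarith [hp0 u]
      have e1 : ∑ u, p u * q u ≤ ∑ u, min (p u) (q u) :=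
        Finset.sum_le_sum fun u _ => hmin u
      have e2 : ∑ u, p u * q u ≤ 1 - (∑ u, min (p u) (q u)) / 2 := by
        have h := Finset.sum_le_sum (fun u (_ : u ∈ (univ : Finset (Fin a))) => hmax u)
        have expand : ∑ u, (1/2) * (p u + q u - min (p u) (q u))
            = (1/2) * (1 + 1 - ∑ u, min (p u) (q u)) := by
          rw [← Finset.mul_sum]
          congr 1
          rw [Finset.sum_sub_distrib, Finset.sum_add_distrib, hp1, hq1]
        rw [expand] at h
        linarith
      have hpq34 : ∑ u, p u * q u ≤ 3/4 := by
        rcases le_total (∑ u, min (p u) (q u)) (3/4) with h | h <;> linarith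
      have hlow : 1 - ∑ u, p u * q u ≤ r z := by
        rw [hr]
        have pointwise : ∀ u1 u2 : Fin a,
            p u1 * q u2 - (if u1 = u2 then p u1 * q u2 else 0)
              ≤ p u1 * q u2 * (if (if u1 = u2 then u1 else z) = z then 1 else 0) := by
          intro u1 u2
          by_cases h : u1 = u2
          · subst h
            simpa using hnn u1 u1 z
          · simp [h]
        have hdiag : ∑ u1, ∑ u2, (if u1 = u2 then p u1 * q u2 else 0) = ∑ u, p u * q u := by
          simp [Finset.sum_ite_eq]
        calc 1 - ∑ u, p u * q u
            = ∑ u1, ∑ u2, (p u1 * q u2 - if u1 = u2 then p u1 * q u2 else 0) := by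
              simp only [Finset.sum_sub_distrib]
              rw [hpq1, hdiag]
          _ ≤ _ := Finset.sum_le_sum fun u1 _ =>
              Finset.sum_le_sum fun u2 _ => pointwise u1 u2
      linarith
  obtain ⟨y₀, hy⟩ := hheavy
  exact entropy_bound a r hr0 hr1 y₀ hy
end

section
/- Let V_1, V_2 be independent with V_j distributed p_{V_j} on finite 𝒱_j, let Y be a random variable on finite 𝒴 jointly distributed with (V_1,V_2), and let E be an event with P(E^c) ≤ ε ≤ 1/2. If conditioned on E, the triple (V_1,V_2,Y) has joint law q with the same marginals p_{V_1}, p_{V_2}, then I(V_1,V_2;Y) ≥ I_q(V_1,V_2;Y) - h_b(ε) - ε·log(|𝒱_1||𝒱_2|), where I_q is mutual information under q. -/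
open Finset

/-- Binary entropy (natural log). -/
noncomputable def binEnt (p : ℝ) : ℝ := -(p * Real.log p) - (1 - p) * Real.log (1 - p)

/-- Shannon entropy of the pushforward of the pmf `P` under the map `f`. -/
noncomputable def pEnt {Ω γ : Type*} [Fintype Ω] [Fintype γ] [DecidableEq γ]
    (P : Ω → ℝ) (f : Ω → γ) : ℝ :=
  ∑ c : γ, Real.negMulLog (∑ ω : Ω, if f ω = c then P ω else 0)

lemma pt (a b : ℝ) (ha : 0 ≤ a) (hb : 0 ≤ b) (hab : a ≠ 0 → 0 < b) :
    Real.negMulLog a ≤ b - a - a * Real.log b := by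
  rcases eq_or_lt_of_le ha with h | h
  · simp only [← h, Real.negMulLog_zero, zero_mul, sub_zero, sub_zero]
    simpa using hb
  · have hb' : 0 < b := hab (ne_of_gt h)
    have h2 : Real.log (b / a) ≤ b / a - 1 :=
      Real.log_le_sub_one_of_pos (by positivity)
    have h3 : Real.log (b / a) = Real.log b - Real.log a :=
      Real.log_div (ne_of_gt hb') (ne_of_gt h)
    have h4 : a * Real.log (b / a) ≤ a * (b / a - 1) :=
      mul_le_mul_of_nonneg_left h2 ha
    have h5 : a * (b / a - 1) = b - a := by field_simp
    rw [h3, mul_sub] at h4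
    rw [Real.negMulLog]
    nlinarith
  
lemma pt2 (a c t : ℝ) (ha : 0 ≤ a) (hc : 0 ≤ c) (ht : 0 ≤ t) (hat : a ≤ t)
    (hac : a ≠ 0 → 0 < c) :
    Real.negMulLog a ≤ c * t - a - a * Real.log c - a * Real.log t := by
  by_cases h : a = 0
  · subst h
    simp only [Real.negMulLog_zero, zero_mul, sub_zero]
    positivity
  · have ha' : 0 < a := lt_of_le_of_ne ha (Ne.symm h)
    have hc' : 0 < c := hac h
    have ht' : 0 < t := lt_of_lt_of_le ha' hat
    have h0 := pt a (c * t) ha (by positivity) (fun _ => by positivity)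
    rw [Real.log_mul (ne_of_gt hc') (ne_of_gt ht'), mul_add] at h0
    linarith

lemma negMulLog_add_le (x y : ℝ) (hx : 0 ≤ x) (hy : 0 ≤ y) :
    Real.negMulLog (x + y) ≤ Real.negMulLog x + Real.negMulLog y := by
  have key : ∀ u : ℝ, 0 ≤ u → u ≤ x + y → -(u * Real.log (x + y)) ≤ Real.negMulLog u := by
    intro u hu hus
    rcases eq_or_lt_of_le hu with h | h
    · simp [← h]
    · have : Real.log u ≤ Real.log (x + y) := Real.log_le_log h hus
      rw [Real.negMulLog]
      nlinarith
  have hx' := key x hx (by linarith)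
  have hy' := key y hy (by linarith)
  have : Real.negMulLog (x + y) = -(x * Real.log (x + y)) + -(y * Real.log (x + y)) := by
    rw [Real.negMulLog]; ring
  linarith

lemma negMulLog_sum_le {ι : Type*} (s : Finset ι) (f : ι → ℝ) (hf : ∀ i ∈ s, 0 ≤ f i) :
    Real.negMulLog (∑ i ∈ s, f i) ≤ ∑ i ∈ s, Real.negMulLog (f i) := by
  have h : Real.negMulLog (∑ i ∈ s, f i) = ∑ i ∈ s, -(f i * Real.log (∑ j ∈ s, f j)) := by
    rw [Real.negMulLog, neg_mul, Finset.sum_mul]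
    rw [← Finset.sum_neg_distrib]
  rw [h]
  apply Finset.sum_le_sum
  intro i hi
  rcases eq_or_lt_of_le (hf i hi) with h0 | h0
  · simp [← h0]
  · have hle : f i ≤ ∑ j ∈ s, f j := Finset.single_le_sum hf hi
    have : Real.log (f i) ≤ Real.log (∑ j ∈ s, f j) := Real.log_le_log h0 hle
    rw [Real.negMulLog]
    nlinarith
lemma hb_bound (β ε : ℝ) (hβ0 : 0 ≤ β) (hβε : β ≤ ε) (hε : ε ≤ 1/2) :
    -((1 - β) * Real.log (1 - ε)) - β * Real.log ε ≤ binEnt ε := by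
  rw [binEnt]
  rcases eq_or_lt_of_le hβε with h | h
  · rw [h]; ring_nf; exact le_refl _
  · have hε0 : 0 < ε := lt_of_le_of_lt hβ0 h
    have hlog : Real.log ε ≤ Real.log (1 - ε) := Real.log_le_log hε0 (by linarith)
    nlinarith
lemma main_CE {V Y : Type*} [Fintype V] [Fintype Y]
    (q m : V × Y → ℝ) (α β ε : ℝ)
    (hq0 : ∀ z, 0 ≤ q z) (hq1 : ∑ z, q z = 1)
    (hm0 : ∀ z, 0 ≤ m z) (hmβ : ∑ z, m z = β)
    (hαβ : α + β = 1) (hβ0 : 0 ≤ β) (hβε : β ≤ ε) (hε : ε ≤ 1/2) :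
    (∑ z, Real.negMulLog (α * q z + m z))
      - (∑ y, Real.negMulLog (α * (∑ v, q (v, y)) + ∑ v, m (v, y)))
    ≤ binEnt ε + ((∑ z, Real.negMulLog (q z)) - ∑ y, Real.negMulLog (∑ v, q (v, y)))
      + ε * Real.log (Fintype.card V) := by
  classical
  have hε0 : 0 ≤ ε := le_trans hβ0 hβε
  have hα0 : 0 ≤ α := by linarith
  have hα1 : α ≤ 1 := by linarith
  -- nonemptiness of V
  have hVne : Nonempty V := by
    by_contra h
    rw [not_nonempty_iff] at h
    rw [Fintype.sum_prod_type] at hq1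
    simp at hq1
  have hN1 : (1 : ℝ) ≤ (Fintype.card V : ℝ) := by
    have := Fintype.card_pos (α := V)
    exact_mod_cast this
  have hN0 : (0 : ℝ) < (Fintype.card V : ℝ) := by linarith
  set N : ℝ := (Fintype.card V : ℝ) with hNdef
  set qY : Y → ℝ := fun y => ∑ v, q (v, y) with hqYdef
  set mY : Y → ℝ := fun y => ∑ v, m (v, y) with hmYdef
  have hqY0 : ∀ y, 0 ≤ qY y := fun y => Finset.sum_nonneg fun v _ => hq0 _
  have hmY0 : ∀ y, 0 ≤ mY y := fun y => Finset.sum_nonneg fun v _ => hm0 _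
  have hqY1 : ∑ y, qY y = 1 := by
    rw [← hq1, Fintype.sum_prod_type_right]
  have hmYβ : ∑ y, mY y = β := by
    rw [← hmβ, Fintype.sum_prod_type_right]
  set Hq : ℝ := ∑ z, Real.negMulLog (q z) with hHq
  set HqY : ℝ := ∑ y, Real.negMulLog (qY y) with hHqY
  set Hm : ℝ := ∑ z, Real.negMulLog (m z) with hHm
  set HmY : ℝ := ∑ y, Real.negMulLog (mY y) with hHmY
  set S : ℝ := ∑ z, Real.negMulLog (α * q z + m z) with hS
  set SY : ℝ := ∑ y, Real.negMulLog (α * qY y + mY y) with hSY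
  -- Step 1+2 : S ≤ negMulLog α + α * Hq + Hm
  have st1 : S ≤ Real.negMulLog α + α * Hq + Hm := by
    have h1 : S ≤ (∑ z, Real.negMulLog (α * q z)) + Hm := by
      rw [hS, hHm, ← Finset.sum_add_distrib]
      exact Finset.sum_le_sum fun z _ =>
        negMulLog_add_le _ _ (mul_nonneg hα0 (hq0 z)) (hm0 z)
    have h2 : (∑ z, Real.negMulLog (α * q z)) = Real.negMulLog α + α * Hq := by
      have : ∀ z : V × Y, Real.negMulLog (α * q z)
          = q z * Real.negMulLog α + α * Real.negMulLog (q z) := fun z =>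
        Real.negMulLog_mul α (q z)
      rw [Finset.sum_congr rfl fun z _ => this z, Finset.sum_add_distrib,
        ← Finset.sum_mul, ← Finset.mul_sum, hq1, one_mul, ← hHq]
    linarith
  -- Step 3 : negMulLog α + α * HqY + HmY ≤ -(α * Real.log (1-ε)) - β * Real.log ε + SY
  have st3 : Real.negMulLog α + α * HqY + HmY
      ≤ -(α * Real.log (1 - ε)) - β * Real.log ε + SY := by
    have h3a : ∀ y, Real.negMulLog (α * qY y) ≤
        (1 - ε) * (α * qY y + mY y) - α * qY y - (α * qY y) * Real.log (1 - ε)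
          - (α * qY y) * Real.log (α * qY y + mY y) := by
      intro y
      exact pt2 _ _ _ (mul_nonneg hα0 (hqY0 y)) (by linarith)
        (add_nonneg (mul_nonneg hα0 (hqY0 y)) (hmY0 y))
        (by nlinarith [hmY0 y]) (fun _ => by linarith)
    have h3b : ∀ y, Real.negMulLog (mY y) ≤
        ε * (α * qY y + mY y) - mY y - mY y * Real.log ε
          - mY y * Real.log (α * qY y + mY y) := by
      intro y
      refine pt2 _ _ _ (hmY0 y) hε0
        (add_nonneg (mul_nonneg hα0 (hqY0 y)) (hmY0 y))
        (by nlinarith [hqY0 y]) ?_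
      intro hne
      have h1 : 0 < mY y := lt_of_le_of_ne (hmY0 y) (Ne.symm hne)
      have h2 : mY y ≤ β := by
        rw [← hmYβ]
        exact Finset.single_le_sum (fun i _ => hmY0 i) (Finset.mem_univ y)
      linarith
    have hsum_a : ∑ y, Real.negMulLog (α * qY y) = Real.negMulLog α + α * HqY := by
      have : ∀ y, Real.negMulLog (α * qY y)
          = qY y * Real.negMulLog α + α * Real.negMulLog (qY y) := fun y =>
        Real.negMulLog_mul α (qY y)
      rw [Finset.sum_congr rfl fun y _ => this y, Finset.sum_add_distrib,
        ← Finset.sum_mul, ← Finset.mul_sum, hqY1, one_mul, ← hHqY]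
    have hA := Finset.sum_le_sum (fun y (_ : y ∈ Finset.univ) => h3a y)
    have hB := Finset.sum_le_sum (fun y (_ : y ∈ Finset.univ) => h3b y)
    have hr1 : ∑ y, (α * qY y + mY y) = 1 := by
      rw [Finset.sum_add_distrib, ← Finset.mul_sum, hqY1, hmYβ]; linarith
    -- sum the RHS of h3a
    have hRa : ∑ y, ((1 - ε) * (α * qY y + mY y) - α * qY y - (α * qY y) * Real.log (1 - ε)
          - (α * qY y) * Real.log (α * qY y + mY y))
        = (1 - ε) - α - α * Real.log (1 - ε)
          - ∑ y, (α * qY y) * Real.log (α * qY y + mY y) := by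
      rw [Finset.sum_sub_distrib, Finset.sum_sub_distrib, Finset.sum_sub_distrib,
        ← Finset.mul_sum, hr1, mul_one, ← Finset.sum_mul, ← Finset.mul_sum, hqY1, mul_one]
    have hRb : ∑ y, (ε * (α * qY y + mY y) - mY y - mY y * Real.log ε
          - mY y * Real.log (α * qY y + mY y))
        = ε - β - β * Real.log ε - ∑ y, mY y * Real.log (α * qY y + mY y) := by
      rw [Finset.sum_sub_distrib, Finset.sum_sub_distrib, Finset.sum_sub_distrib,
        ← Finset.mul_sum, hr1, mul_one, ← Finset.sum_mul, hmYβ]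
    have hSYeq : SY = -∑ y, ((α * qY y) * Real.log (α * qY y + mY y)
        + mY y * Real.log (α * qY y + mY y)) := by
      rw [hSY, ← Finset.sum_neg_distrib]
      refine Finset.sum_congr rfl fun y _ => ?_
      rw [Real.negMulLog]; ring
    rw [Finset.sum_add_distrib] at hSYeq
    rw [hRa] at hA
    rw [hRb] at hB
    rw [hsum_a] at hA
    linarith
  -- Step 4 : Hm ≤ HmY + β * Real.log N
  have st4 : Hm ≤ HmY + β * Real.log N := by
    have h4 : ∀ z : V × Y, Real.negMulLog (m z) ≤
        N⁻¹ * mY z.2 - m z - m z * Real.log N⁻¹ - m z * Real.log (mY z.2) := by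
      intro z
      refine pt2 _ _ _ (hm0 z) (by positivity) (hmY0 z.2) ?_ (fun _ => by positivity)
      rw [hmYdef]
      calc m z = m (z.1, z.2) := by rw [Prod.mk.eta]
        _ ≤ ∑ v, m (v, z.2) := Finset.single_le_sum (f := fun v => m (v, z.2))
              (fun v _ => hm0 _) (Finset.mem_univ z.1)
    have hA := Finset.sum_le_sum (fun z (_ : z ∈ Finset.univ) => h4 z)
    have e1 : ∑ z : V × Y, N⁻¹ * mY z.2 = β := by
      rw [Fintype.sum_prod_type_right]
      have : ∀ y, ∑ _v : V, N⁻¹ * mY y = N * (N⁻¹ * mY y) := by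
        intro y
        rw [Finset.sum_const, Finset.card_univ, nsmul_eq_mul, hNdef]
      rw [Finset.sum_congr rfl fun y _ => this y]
      have : ∀ y, N * (N⁻¹ * mY y) = mY y := by
        intro y; field_simp
      rw [Finset.sum_congr rfl fun y _ => this y, hmYβ]
    have e2 : ∑ z : V × Y, m z * Real.log N⁻¹ = β * Real.log N⁻¹ := by
      rw [← Finset.sum_mul, hmβ]
    have e3 : ∑ z : V × Y, m z * Real.log (mY z.2) = ∑ y, mY y * Real.log (mY y) := by
      rw [Fintype.sum_prod_type_right]
      refine Finset.sum_congr rfl fun y _ => ?_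
      show ∑ v : V, m (v, y) * Real.log (mY y) = mY y * Real.log (mY y)
      rw [← Finset.sum_mul]
    have e4 : HmY = -∑ y, mY y * Real.log (mY y) := by
      rw [hHmY, ← Finset.sum_neg_distrib]
      exact Finset.sum_congr rfl fun y _ => by rw [Real.negMulLog]; ring
    rw [Finset.sum_sub_distrib, Finset.sum_sub_distrib, Finset.sum_sub_distrib,
      e1, hmβ, e2, e3] at hA
    have hlogN : Real.log N⁻¹ = -Real.log N := Real.log_inv N
    rw [hlogN] at hA
    rw [← hHm] at hA
    linarith
  -- Step 5 : HqY ≤ Hq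
  have st5 : HqY ≤ Hq := by
    rw [hHqY, hHq, Fintype.sum_prod_type_right]
    exact Finset.sum_le_sum fun y _ =>
      negMulLog_sum_le Finset.univ (fun v => q (v, y)) (fun v _ => hq0 _)
  -- combine
  have hbb := hb_bound β ε hβ0 hβε hε
  have hα1β : α = 1 - β := by linarith
  have h6 : α * Hq - α * HqY ≤ Hq - HqY := by
    nlinarith [mul_nonneg (by linarith : (0:ℝ) ≤ 1 - α) (by linarith : (0:ℝ) ≤ Hq - HqY)]
  have h7 : β * Real.log N ≤ ε * Real.log N := by
    have : (0:ℝ) ≤ Real.log N := Real.log_nonneg hN1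
    nlinarith
  rw [← hα1β] at hbb
  linarith
lemma entV {V1 V2 : Type*} [Fintype V1] [Fintype V2]
    (w : V1 × V2 → ℝ) (p1 : V1 → ℝ) (p2 : V2 → ℝ)
    (hw0 : ∀ v, 0 ≤ w v)
    (h1 : ∀ a, p1 a = ∑ b, w (a, b)) (h2 : ∀ b, p2 b = ∑ a, w (a, b))
    (hs : ∑ v, w v = 1) :
    ∑ v : V1 × V2, Real.negMulLog (w v) ≤
      ∑ v : V1 × V2, Real.negMulLog (p1 v.1 * p2 v.2) := by
  classical
  have hp10 : ∀ a, 0 ≤ p1 a := fun a => (h1 a) ▸ Finset.sum_nonneg fun b _ => hw0 _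
  have hp20 : ∀ b, 0 ≤ p2 b := fun b => (h2 b) ▸ Finset.sum_nonneg fun a _ => hw0 _
  have hp11 : ∑ a, p1 a = 1 := by
    rw [Finset.sum_congr rfl fun a _ => h1 a, ← Fintype.sum_prod_type, hs]
  have hp21 : ∑ b, p2 b = 1 := by
    rw [Finset.sum_congr rfl fun b _ => h2 b, ← Fintype.sum_prod_type_right, hs]
  -- pointwise bound
  have hpw : ∀ v : V1 × V2, Real.negMulLog (w v) ≤
      p1 v.1 * p2 v.2 - w v - w v * Real.log (p1 v.1) - w v * Real.log (p2 v.2) := by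
    intro v
    refine pt2 _ _ _ (hw0 v) (hp10 v.1) (hp20 v.2) ?_ ?_
    · rw [h2 v.2]
      exact Finset.single_le_sum (f := fun a => w (a, v.2))
        (fun a _ => hw0 _) (Finset.mem_univ v.1)
    · intro hne
      have hlt : 0 < w v := lt_of_le_of_ne (hw0 v) (Ne.symm hne)
      have : w v ≤ p1 v.1 := by
        rw [h1 v.1]
        exact Finset.single_le_sum (f := fun b => w (v.1, b))
          (fun b _ => hw0 _) (Finset.mem_univ v.2)
      linarith
  have hA := Finset.sum_le_sum fun v (_ : v ∈ Finset.univ) => hpw v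
  have e0 : ∑ v : V1 × V2, p1 v.1 * p2 v.2 = 1 := by
    rw [Fintype.sum_prod_type]
    simp only [← Finset.mul_sum, hp21, mul_one, hp11]
  have e1 : ∑ v : V1 × V2, w v * Real.log (p1 v.1) = ∑ a, p1 a * Real.log (p1 a) := by
    rw [Fintype.sum_prod_type]
    refine Finset.sum_congr rfl fun a _ => ?_
    show ∑ b : V2, w (a, b) * Real.log (p1 a) = p1 a * Real.log (p1 a)
    rw [← Finset.sum_mul, ← h1 a]
  have e2 : ∑ v : V1 × V2, w v * Real.log (p2 v.2) = ∑ b, p2 b * Real.log (p2 b) := by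
    rw [Fintype.sum_prod_type_right]
    refine Finset.sum_congr rfl fun b _ => ?_
    show ∑ a : V1, w (a, b) * Real.log (p2 b) = p2 b * Real.log (p2 b)
    rw [← Finset.sum_mul, ← h2 b]
  have e3 : ∑ v : V1 × V2, Real.negMulLog (p1 v.1 * p2 v.2)
      = (∑ a, Real.negMulLog (p1 a)) + ∑ b, Real.negMulLog (p2 b) := by
    have : ∀ v : V1 × V2, Real.negMulLog (p1 v.1 * p2 v.2)
        = p2 v.2 * Real.negMulLog (p1 v.1) + p1 v.1 * Real.negMulLog (p2 v.2) :=
      fun v => Real.negMulLog_mul _ _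
    rw [Finset.sum_congr rfl fun v _ => this v, Finset.sum_add_distrib]
    congr 1
    · rw [Fintype.sum_prod_type]
      have : ∀ a, ∑ b, p2 b * Real.negMulLog (p1 a) = Real.negMulLog (p1 a) := by
        intro a
        rw [← Finset.sum_mul, hp21, one_mul]
      exact Finset.sum_congr rfl fun a _ => this a
    · rw [Fintype.sum_prod_type_right]
      have : ∀ b, ∑ a, p1 a * Real.negMulLog (p2 b) = Real.negMulLog (p2 b) := by
        intro b
        rw [← Finset.sum_mul, hp11, one_mul]
      exact Finset.sum_congr rfl fun b _ => this b
  have e4 : ∀ (g : V1 → ℝ), ∑ a, Real.negMulLog (g a) = -∑ a, g a * Real.log (g a) := by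
    intro g
    rw [← Finset.sum_neg_distrib]
    exact Finset.sum_congr rfl fun a _ => by rw [Real.negMulLog]; ring
  have e5 : ∀ (g : V2 → ℝ), ∑ b, Real.negMulLog (g b) = -∑ b, g b * Real.log (g b) := by
    intro g
    rw [← Finset.sum_neg_distrib]
    exact Finset.sum_congr rfl fun b _ => by rw [Real.negMulLog]; ring
  rw [Finset.sum_sub_distrib, Finset.sum_sub_distrib, Finset.sum_sub_distrib,
    e0, hs, e1, e2] at hA
  rw [e3, e4 p1, e5 p2]
  linarith

/-- If `V₁ ⊥ V₂` with marginals `p₁, p₂`, `Y` is jointly distributed with `(V₁,V₂)`,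
`E` is an event with `P(Eᶜ) ≤ ε ≤ 1/2`, and conditioned on `E` the triple `(V₁,V₂,Y)`
has law `q` with the same marginals `p₁, p₂`, then
`I(V₁,V₂;Y) ≥ I_q(V₁,V₂;Y) − h_b(ε) − ε·log(|𝒱₁||𝒱₂|)`. -/
theorem stmt_7 {Ω V1 V2 Y : Type*} [Fintype Ω] [DecidableEq Ω]
    [Fintype V1] [Fintype V2] [Fintype Y]
    [DecidableEq V1] [DecidableEq V2] [DecidableEq Y]
    (μ : Ω → ℝ) (hμ0 : ∀ ω, 0 ≤ μ ω) (hμ1 : ∑ ω, μ ω = 1)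
    (Vm : Ω → V1 × V2) (Ym : Ω → Y)
    (p1 : V1 → ℝ) (p2 : V2 → ℝ)
    (hind : ∀ v : V1 × V2, (∑ ω, if Vm ω = v then μ ω else 0) = p1 v.1 * p2 v.2)
    (E : Finset Ω) (ε : ℝ) (hε2 : ε ≤ 1 / 2)
    (hEc : (∑ ω ∈ Eᶜ, μ ω) ≤ ε)
    (q : (V1 × V2) × Y → ℝ) (hq0 : ∀ z, 0 ≤ q z) (hq1 : ∑ z, q z = 1)
    (hcond : ∀ z : (V1 × V2) × Y,
      (∑ ω ∈ E, if (Vm ω, Ym ω) = z then μ ω else 0) = (∑ ω ∈ E, μ ω) * q z)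
    (hqm1 : ∀ v1, (∑ z : (V1 × V2) × Y, if z.1.1 = v1 then q z else 0) = p1 v1)
    (hqm2 : ∀ v2, (∑ z : (V1 × V2) × Y, if z.1.2 = v2 then q z else 0) = p2 v2) :
    pEnt μ Vm + pEnt μ Ym - pEnt μ (fun ω => (Vm ω, Ym ω))
      ≥ (pEnt q Prod.fst + pEnt q Prod.snd - pEnt q id)
        - binEnt ε - ε * Real.log ((Fintype.card V1 : ℝ) * Fintype.card V2) := by
  classical
  -- notation
  set α : ℝ := ∑ ω ∈ E, μ ω with hαdef
  set β : ℝ := ∑ ω ∈ Eᶜ, μ ω with hβdef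
  have hαβ : α + β = 1 := by rw [hαdef, hβdef, Finset.sum_add_sum_compl]; exact hμ1
  have hβ0 : 0 ≤ β := Finset.sum_nonneg fun ω _ => hμ0 ω
  -- the "bad part" of the joint distribution
  set m : (V1 × V2) × Y → ℝ :=
    fun z => ∑ ω ∈ Eᶜ, if (Vm ω, Ym ω) = z then μ ω else 0 with hmdef
  have hm0 : ∀ z, 0 ≤ m z := by
    intro z
    exact Finset.sum_nonneg fun ω _ => by split <;> simp [hμ0 ω]
  have hmβ : ∑ z, m z = β := by
    rw [hmdef, hβdef]
    rw [Finset.sum_comm]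
    exact Finset.sum_congr rfl fun ω _ => by simp [Finset.sum_ite_eq]
  -- joint distribution of (V, Y) under μ splits as α • q + m
  have hsplit : ∀ z : (V1 × V2) × Y,
      (∑ ω, if (Vm ω, Ym ω) = z then μ ω else 0) = α * q z + m z := by
    intro z
    rw [← Finset.sum_add_sum_compl E (fun ω => if (Vm ω, Ym ω) = z then μ ω else 0),
      hcond z]
  have hJoint : pEnt μ (fun ω => (Vm ω, Ym ω))
      = ∑ z, Real.negMulLog (α * q z + m z) := by
    unfold pEnt
    exact Finset.sum_congr rfl fun z _ => by rw [hsplit z]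
  -- collapse lemma for Y-marginals
  have hcol : ∀ (s : Finset Ω) (y : Y),
      (∑ v : V1 × V2, ∑ ω ∈ s, if (Vm ω, Ym ω) = (v, y) then μ ω else 0)
        = ∑ ω ∈ s, if Ym ω = y then μ ω else 0 := by
    intro s y
    rw [Finset.sum_comm]
    refine Finset.sum_congr rfl fun ω _ => ?_
    by_cases h : Ym ω = y
    · simp [Prod.mk.injEq, h, Finset.sum_ite_eq]
    · simp [Prod.mk.injEq, h]
  have hYE : ∀ y : Y, (∑ ω ∈ E, if Ym ω = y then μ ω else 0)
      = α * ∑ v : V1 × V2, q (v, y) := by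
    intro y
    rw [← hcol E y, Finset.mul_sum]
    exact Finset.sum_congr rfl fun v _ => hcond (v, y)
  have hYm : pEnt μ Ym
      = ∑ y, Real.negMulLog (α * (∑ v : V1 × V2, q (v, y)) + ∑ v : V1 × V2, m (v, y)) := by
    unfold pEnt
    refine Finset.sum_congr rfl fun y _ => ?_
    congr 1
    rw [← Finset.sum_add_sum_compl E (fun ω => if Ym ω = y then μ ω else 0), hYE y,
      ← hcol Eᶜ y]
  -- identification of pEnt q with plain sums
  have hqid : pEnt q id = ∑ z, Real.negMulLog (q z) := by
    unfold pEnt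
    exact Finset.sum_congr rfl fun z _ => by simp [Finset.sum_ite_eq']
  have hqsnd : pEnt q Prod.snd = ∑ y, Real.negMulLog (∑ v : V1 × V2, q (v, y)) := by
    unfold pEnt
    refine Finset.sum_congr rfl fun y _ => ?_
    congr 1
    rw [Fintype.sum_prod_type]
    refine Finset.sum_congr rfl fun v _ => ?_
    show (∑ y' : Y, if y' = y then q (v, y') else 0) = q (v, y)
    simp [Finset.sum_ite_eq']
  have hqfst : pEnt q Prod.fst = ∑ v : V1 × V2, Real.negMulLog (∑ y, q (v, y)) := by
    unfold pEnt
    refine Finset.sum_congr rfl fun v _ => ?_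
    congr 1
    rw [Fintype.sum_prod_type, Finset.sum_comm]
    refine Finset.sum_congr rfl fun y _ => ?_
    show (∑ x : V1 × V2, if x = v then q (x, y) else 0) = q (v, y)
    simp [Finset.sum_ite_eq']
  -- marginals of q on V1 and V2
  have h1' : ∀ a, p1 a = ∑ b, ∑ y, q ((a, b), y) := by
    intro a
    rw [← hqm1 a, Fintype.sum_prod_type, Fintype.sum_prod_type]
    have step : ∀ v1 : V1, (∑ v2 : V2, ∑ y : Y, if (((v1, v2), y)).1.1 = a
          then q ((v1, v2), y) else 0)
        = if v1 = a then ∑ v2 : V2, ∑ y : Y, q ((v1, v2), y) else 0 := by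
      intro v1
      show (∑ v2 : V2, ∑ y : Y, if v1 = a then q ((v1, v2), y) else 0) = _
      split_ifs with h <;> simp
    rw [Finset.sum_congr rfl fun v1 _ => step v1]
    simp [Finset.sum_ite_eq']
  have h2' : ∀ b, p2 b = ∑ a, ∑ y, q ((a, b), y) := by
    intro b
    rw [← hqm2 b, Fintype.sum_prod_type, Fintype.sum_prod_type]
    refine Finset.sum_congr rfl fun v1 _ => ?_
    have step : ∀ v2 : V2, (∑ y : Y, if (((v1, v2), y)).1.2 = b
          then q ((v1, v2), y) else 0)
        = if v2 = b then ∑ y : Y, q ((v1, v2), y) else 0 := by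
      intro v2
      show (∑ y : Y, if v2 = b then q ((v1, v2), y) else 0) = _
      split_ifs with h <;> simp
    rw [Finset.sum_congr rfl fun v2 _ => step v2]
    simp [Finset.sum_ite_eq']
  -- Step A : pEnt μ Vm ≥ pEnt q Prod.fst
  have hVm : pEnt μ Vm = ∑ v : V1 × V2, Real.negMulLog (p1 v.1 * p2 v.2) := by
    unfold pEnt
    exact Finset.sum_congr rfl fun v _ => by rw [hind v]
  have hA : pEnt q Prod.fst ≤ pEnt μ Vm := by
    rw [hVm, hqfst]
    refine entV (fun v => ∑ y, q (v, y)) p1 p2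
      (fun v => Finset.sum_nonneg fun y _ => hq0 _) h1' h2' ?_
    rw [← Fintype.sum_prod_type, hq1]
  -- Step B : the conditional entropy bound
  have hB := main_CE q m α β ε hq0 hq1 hm0 hmβ hαβ hβ0 hEc hε2
  have hcard : Real.log ((Fintype.card (V1 × V2) : ℝ))
      = Real.log ((Fintype.card V1 : ℝ) * Fintype.card V2) := by
    rw [Fintype.card_prod]
    push_cast
    ring
  rw [hcard] at hB
  rw [hVm, hqfst] at hA
  rw [ge_iff_le, hJoint, hYm, hqid, hqsnd, hqfst, hVm]
  linarith
end

section
/- For the source of Dueck's example with parameters a ≥ 2, k ≥ 2 and even η ≥ 6: W(c^k,d^k) = (k-1)/k if c^k = d^k = 0^k; (a^{ηk}-1)/(k a^{ηk}(a^k-1)) if c^k = d^k ≠ 0^k; 1/(k a^{ηk}(a^k-1)) if c^k = 0^k, d^k ≠ 0^k; and 0 otherwise — this defines a valid probability mass function on ({0,…,a-1}^k)^2, and P(S_1 ≠ S_2) = 1/(k a^{ηk}). -/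
open Finset

lemma sum_ite_eq_card_aux {ι : Type*} [Fintype ι] [DecidableEq ι] (z : ι) (α β : ℝ) :
    ∑ d : ι, (if d = z then α else β) = α + ((Fintype.card ι : ℝ) - 1) * β := by
  have h : ∀ d : ι, (if d = z then α else β) = (if d = z then α - β else 0) + β := by
    intro d; split <;> ring
  simp_rw [h, Finset.sum_add_distrib,
    Finset.sum_ite_eq' Finset.univ z (fun _ => α - β), Finset.mem_univ, if_true,
    Finset.sum_const, Finset.card_univ, nsmul_eq_mul]
  ring

/-- Dueck's source with parameters `a ≥ 2`, `k ≥ 2`, even `η ≥ 6` is a valid pmf on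
`({0,…,a-1}^k)²`, and `P(S₁ ≠ S₂) = 1/(k·a^{ηk})`. -/
theorem stmt_11 (a k η : ℕ) (ha : 2 ≤ a) (hk : 2 ≤ k) (hη : 6 ≤ η) (hηe : Even η)
    (z : Fin k → Fin a) (hz : z = fun _ => (⟨0, by omega⟩ : Fin a))
    (W : (Fin k → Fin a) × (Fin k → Fin a) → ℝ)
    (hW : ∀ c d : Fin k → Fin a, W (c, d) =
      if c = z ∧ d = z then ((k : ℝ) - 1) / (k : ℝ)
      else if c = d then
        ((a : ℝ) ^ (η * k) - 1) / ((k : ℝ) * (a : ℝ) ^ (η * k) * ((a : ℝ) ^ k - 1))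
      else if c = z then 1 / ((k : ℝ) * (a : ℝ) ^ (η * k) * ((a : ℝ) ^ k - 1))
      else 0) :
    (∀ pr, 0 ≤ W pr) ∧ (∑ pr, W pr = 1) ∧
    (∑ pr : (Fin k → Fin a) × (Fin k → Fin a), if pr.1 ≠ pr.2 then W pr else 0)
      = 1 / ((k : ℝ) * (a : ℝ) ^ (η * k)) := by
  have ha1 : (1 : ℝ) < (a : ℝ) := by exact_mod_cast (by omega : 1 < a)
  have hA : (1 : ℝ) < (a : ℝ) ^ (η * k) := one_lt_pow₀ ha1 (by positivity)
  have hM : (1 : ℝ) < (a : ℝ) ^ k := one_lt_pow₀ ha1 (by omega)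
  have hkR : (1 : ℝ) ≤ (k : ℝ) := by exact_mod_cast (by omega : 1 ≤ k)
  have hk0 : (k : ℝ) ≠ 0 := by positivity
  have hA0 : ((a : ℝ) ^ (η * k)) ≠ 0 := by positivity
  have hM0 : ((a : ℝ) ^ k - 1) ≠ 0 := by nlinarith
  set A : ℝ := (a : ℝ) ^ (η * k) with hAdef
  set M : ℝ := (a : ℝ) ^ k with hMdef
  set t : ℝ := 1 / ((k : ℝ) * A * (M - 1)) with htdef
  set β : ℝ := (A - 1) / ((k : ℝ) * A * (M - 1)) with hβdef
  have hcard : (Fintype.card (Fin k → Fin a) : ℝ) = M := by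
    simp [hMdef]
  have ht0 : 0 ≤ t := by
    apply div_nonneg (by norm_num)
    have : 0 ≤ M - 1 := by linarith
    positivity
  have hβ0 : 0 ≤ β := by
    apply div_nonneg (by linarith)
    have : 0 ≤ M - 1 := by linarith
    positivity
  refine ⟨?_, ?_, ?_⟩
  · rintro ⟨c, d⟩
    rw [hW]
    split_ifs
    · apply div_nonneg (by linarith) (by linarith)
    · exact hβ0
    · exact ht0
    · exact le_refl 0
  · rw [Fintype.sum_prod_type]
    have hinner : ∀ c, (∑ d, W (c, d)) =
        if c = z then ((k : ℝ) - 1) / k + (M - 1) * t else β := by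
      intro c
      by_cases hc : c = z
      · rw [if_pos hc]
        have h1 : ∀ d, W (c, d) = if d = z then ((k : ℝ) - 1) / k else t := by
          intro d
          rw [hW]
          rcases eq_or_ne d z with h | h
          · simp [hc, h]
          · simp [hc, h, Ne.symm h]
        simp_rw [h1, sum_ite_eq_card_aux, hcard]
      · rw [if_neg hc]
        have h1 : ∀ d, W (c, d) = if d = c then β else 0 := by
          intro d
          rw [hW]
          rcases eq_or_ne d c with h | h
          · simp [hc, h]
          · simp [hc, h, Ne.symm h]
        simp_rw [h1, Finset.sum_ite_eq' Finset.univ c (fun _ => β), Finset.mem_univ, if_true]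
    simp_rw [hinner, sum_ite_eq_card_aux, hcard]
    rw [htdef, hβdef]
    field_simp
    ring
  · rw [Fintype.sum_prod_type]
    have hinner : ∀ c, (∑ d, if c ≠ d then W (c, d) else 0) =
        if c = z then (M - 1) * t else 0 := by
      intro c
      by_cases hc : c = z
      · rw [if_pos hc]
        have h1 : ∀ d, (if c ≠ d then W (c, d) else 0) = if d = z then 0 else t := by
          intro d
          rcases eq_or_ne d z with h | h
          · simp [hc, h]
          · rw [if_pos (by rw [hc]; exact Ne.symm h), hW]
            simp [hc, h, Ne.symm h]
        simp_rw [h1, sum_ite_eq_card_aux, hcard]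
        ring
      · rw [if_neg hc]
        have h1 : ∀ d, (if c ≠ d then W (c, d) else 0) = 0 := by
          intro d
          rcases eq_or_ne c d with h | h
          · simp [h]
          · rw [if_pos h, hW]
            simp [hc, h]
        simp [h1]
    simp_rw [hinner, Finset.sum_ite_eq' Finset.univ z (fun _ => (M - 1) * t),
      Finset.mem_univ, if_true, htdef]
    field_simp
end

section
/- For Dueck's source with a^k ≥ 2 and k ≥ 2: H(S_2) = h_b(1/k) + (1/k)·log(a^k - 1) ≥ log a + (1/k)·log(k/2) ≥ log a, where h_b is binary entropy (in the same logarithm base). -/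
open Finset

/-- For the marginal of Dueck's source (`P(S₂ = 0^k) = (k-1)/k` and the nonzero
sequences uniformly sharing the remaining mass `1/k`), with `a^k ≥ 2` and `k ≥ 2`:
`H(S₂) = h_b(1/k) + (1/k)·log(a^k − 1) ≥ log a + (1/k)·log(k/2) ≥ log a`. -/
theorem stmt_12 (a k : ℕ) (ha : 0 < a) (hk : 2 ≤ k) (hak : 2 ≤ a ^ k)
    (z : Fin k → Fin a) (hz : z = fun _ => (⟨0, ha⟩ : Fin a))
    (p2 : (Fin k → Fin a) → ℝ)
    (hp2 : ∀ d, p2 d = if d = z then ((k : ℝ) - 1) / (k : ℝ)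
      else 1 / ((k : ℝ) * ((a : ℝ) ^ k - 1))) :
    (∑ d, Real.negMulLog (p2 d))
        = binEnt (1 / (k : ℝ)) + (1 / (k : ℝ)) * Real.log ((a : ℝ) ^ k - 1) ∧
    Real.log (a : ℝ) + (1 / (k : ℝ)) * Real.log ((k : ℝ) / 2)
        ≤ binEnt (1 / (k : ℝ)) + (1 / (k : ℝ)) * Real.log ((a : ℝ) ^ k - 1) ∧
    Real.log (a : ℝ)
        ≤ binEnt (1 / (k : ℝ)) + (1 / (k : ℝ)) * Real.log ((a : ℝ) ^ k - 1) := by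
  have hkr : (2:ℝ) ≤ (k:ℝ) := by exact_mod_cast hk
  have hk0 : (0:ℝ) < (k:ℝ) := by linarith
  have hk1 : (0:ℝ) < (k:ℝ) - 1 := by linarith
  have hN : (2:ℝ) ≤ (a:ℝ) ^ k := by exact_mod_cast hak
  have hN1 : (0:ℝ) < (a:ℝ) ^ k - 1 := by linarith
  set N : ℝ := (a:ℝ) ^ k with hNdef
  set L1 : ℝ := Real.log (k:ℝ)
  set L2 : ℝ := Real.log ((k:ℝ) - 1)
  set L3 : ℝ := Real.log (N - 1)
  -- entropy computation
  have hcard : (Fintype.card (Fin k → Fin a)) = a ^ k := by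
    simp [Fintype.card_fun]
  have hsum : (∑ d, Real.negMulLog (p2 d))
      = Real.negMulLog (((k:ℝ) - 1) / (k:ℝ))
        + (N - 1) * Real.negMulLog (1 / ((k:ℝ) * (N - 1))) := by
    rw [← Finset.add_sum_erase _ _ (Finset.mem_univ z)]
    have h1 : p2 z = ((k:ℝ) - 1) / (k:ℝ) := by rw [hp2]; simp
    have h2 : ∑ d ∈ Finset.univ.erase z, Real.negMulLog (p2 d)
        = (N - 1) * Real.negMulLog (1 / ((k:ℝ) * (N - 1))) := by
      rw [Finset.sum_congr rfl (fun d hd => by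
        rw [hp2 d, if_neg (Finset.ne_of_mem_erase hd)])]
      rw [Finset.sum_const, Finset.card_erase_of_mem (Finset.mem_univ z),
        Finset.card_univ, hcard, nsmul_eq_mul]
      congr 1
      have h1le : 1 ≤ a ^ k := le_trans (by norm_num) hak
      push_cast [Nat.cast_sub h1le]
      ring
    rw [h1, h2]
  have hbin : binEnt (1 / (k:ℝ))
      = -((1/(k:ℝ)) * (-L1)) - (((k:ℝ)-1)/(k:ℝ)) * (L2 - L1) := by
    unfold binEnt
    rw [Real.log_div one_ne_zero (ne_of_gt hk0), Real.log_one]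
    have : 1 - 1/(k:ℝ) = ((k:ℝ)-1)/(k:ℝ) := by field_simp
    rw [this, Real.log_div (ne_of_gt hk1) (ne_of_gt hk0)]
    ring
  have heq : (∑ d, Real.negMulLog (p2 d))
      = binEnt (1 / (k:ℝ)) + (1 / (k:ℝ)) * L3 := by
    rw [hsum, hbin]
    unfold Real.negMulLog
    rw [Real.log_div (ne_of_gt hk1) (ne_of_gt hk0),
      Real.log_div one_ne_zero (by positivity : (k:ℝ) * (N-1) ≠ 0),
      Real.log_one, Real.log_mul (ne_of_gt hk0) (ne_of_gt hN1)]
    field_simp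
    ring
  refine ⟨heq, ?_, ?_⟩
  · -- second part
    have hL12 : L2 ≤ L1 := Real.log_le_log hk1 (by linarith)
    have hbge : (1/(k:ℝ)) * L1 ≤ binEnt (1 / (k:ℝ)) := by
      rw [hbin]
      have hc : (0:ℝ) ≤ ((k:ℝ)-1)/(k:ℝ) := by positivity
      nlinarith [mul_le_mul_of_nonneg_left hL12 hc]
    have hL3 : Real.log N - Real.log 2 ≤ L3 := by
      rw [← Real.log_div (by positivity) (by norm_num)]
      exact Real.log_le_log (by positivity) (by linarith)
    have hlogN : Real.log N = (k:ℝ) * Real.log (a:ℝ) := by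
      rw [hNdef, Real.log_pow]
    have hL3' : Real.log (a:ℝ) - (1/(k:ℝ)) * Real.log 2 ≤ (1/(k:ℝ)) * L3 := by
      have := mul_le_mul_of_nonneg_left hL3 (by positivity : (0:ℝ) ≤ 1/(k:ℝ))
      rw [hlogN] at this
      have hkk : (1/(k:ℝ)) * ((k:ℝ) * Real.log (a:ℝ)) = Real.log (a:ℝ) := by
        field_simp
      linarith [this, hkk ▸ this]
    have hlogk2 : Real.log ((k:ℝ)/2) = L1 - Real.log 2 :=
      Real.log_div (ne_of_gt hk0) (by norm_num)
    rw [hlogk2]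
    nlinarith [hbge, hL3']
  · -- third part
    have hL12 : L2 ≤ L1 := Real.log_le_log hk1 (by linarith)
    have hbge : (1/(k:ℝ)) * L1 ≤ binEnt (1 / (k:ℝ)) := by
      rw [hbin]
      have hc : (0:ℝ) ≤ ((k:ℝ)-1)/(k:ℝ) := by positivity
      nlinarith [mul_le_mul_of_nonneg_left hL12 hc]
    have hL3 : Real.log N - Real.log 2 ≤ L3 := by
      rw [← Real.log_div (by positivity) (by norm_num)]
      exact Real.log_le_log (by positivity) (by linarith)
    have hlogN : Real.log N = (k:ℝ) * Real.log (a:ℝ) := by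
      rw [hNdef, Real.log_pow]
    have hlog2L1 : Real.log 2 ≤ L1 := Real.log_le_log (by norm_num) hkr
    have hkk : (1/(k:ℝ)) * ((k:ℝ) * Real.log (a:ℝ)) = Real.log (a:ℝ) := by
      field_simp
    have h1 : (1/(k:ℝ)) * (Real.log N - Real.log 2) ≤ (1/(k:ℝ)) * L3 :=
      mul_le_mul_of_nonneg_left hL3 (by positivity)
    have h2 : (1/(k:ℝ)) * (Real.log N - Real.log 2)
        = Real.log (a:ℝ) - (1/(k:ℝ)) * Real.log 2 := by
      rw [hlogN]; field_simp
    have h3 : (1/(k:ℝ)) * Real.log 2 ≤ (1/(k:ℝ)) * L1 :=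
      mul_le_mul_of_nonneg_left hlog2L1 (by positivity)
    linarith
end

section
/- For Dueck's source, the conditional entropy satisfies H(S_2 | S_1) ≤ h_b(2/(k a^{ηk})) + (2 log a)/a^{ηk}; in particular H(S_2|S_1) → 0 as a → ∞ for fixed k, η. -/
/-! Given `S₁`, only the row `S₁ = 0` of Dueck's source is random, so with `φ = negMulLog`,
`p = (k-1)/k` and `q = 1/(k a^{ηk})` one gets `H(S₂|S₁) = φ(p) + φ(q) - φ(p+q) + q log(a^k - 1)`.
The estimates `φ(p) - φ(p+q) ≤ q`, `φ(q) + q ≤ φ(2q)` for small `q`, `0 ≤ φ(1-2q)` and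
`log(a^k - 1) ≤ k log a` bound this by `h_b(2q) + 2 log a / a^{ηk}`, and both terms tend to `0`. -/

open Finset

/-- The joint pmf of Dueck's source on `({0,…,a-1}^k)²`. -/
noncomputable def dueckW (k η a : ℕ) (h : 2 ≤ a) :
    (Fin k → Fin a) × (Fin k → Fin a) → ℝ := fun pr =>
  let z : Fin k → Fin a := fun _ => ⟨0, by omega⟩
  if pr.1 = z ∧ pr.2 = z then ((k : ℝ) - 1) / (k : ℝ)
  else if pr.1 = pr.2 then
    ((a : ℝ) ^ (η * k) - 1) / ((k : ℝ) * (a : ℝ) ^ (η * k) * ((a : ℝ) ^ k - 1))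
  else if pr.1 = z then 1 / ((k : ℝ) * (a : ℝ) ^ (η * k) * ((a : ℝ) ^ k - 1))
  else 0

/-- The conditional entropy `H(S₂ | S₁)` of Dueck's source (joint entropy minus the
entropy of the first marginal); set to `0` for `a < 2`. -/
noncomputable def dueckCondEnt (k η a : ℕ) : ℝ :=
  if h : 2 ≤ a then
    (∑ pr : (Fin k → Fin a) × (Fin k → Fin a), Real.negMulLog (dueckW k η a h pr))
      - ∑ c : Fin k → Fin a, Real.negMulLog (∑ d : Fin k → Fin a, dueckW k η a h (c, d))
  else 0

open Real Filter Topology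

lemma binEnt_eq_binEntropy : binEnt = binEntropy := by
  funext p
  simp only [binEntropy_eq_negMulLog_add_negMulLog_one_sub, binEnt, negMulLog]
  ring

lemma negMulLog_add_le_s13 {p q : ℝ} (hp : 0 ≤ p) (hq : 0 ≤ q) :
    negMulLog (p + q) ≤ negMulLog p + negMulLog q := by
  have key : ∀ {x y : ℝ}, 0 ≤ x → 0 ≤ y → x * log x ≤ x * log (x + y) := by
    intro x y hx hy
    rcases hx.eq_or_lt with rfl | hx
    · simp
    · exact mul_le_mul_of_nonneg_left (log_le_log hx (by linarith)) hx.le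
  simp only [negMulLog]
  linarith [key hp hq, add_comm p q ▸ key hq hp]

lemma negMulLog_sub_negMulLog_add_le {p q : ℝ} (hp : 0 < p) (hq : 0 ≤ q) (hpq : p + q ≤ 1) :
    negMulLog p - negMulLog (p + q) ≤ q := by
  have hratio : p * log ((p + q) / p) ≤ q := by
    have := log_le_sub_one_of_pos (show 0 < (p + q) / p by positivity)
    calc p * log ((p + q) / p) ≤ p * ((p + q) / p - 1) := mul_le_mul_of_nonneg_left this hp.le
      _ = q := by field_simp; ring
  have hlog : q * log (p + q) ≤ 0 := mul_nonpos_of_nonneg_of_nonpos hq (log_nonpos (by linarith) hpq)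
  rw [log_div (by linarith) hp.ne'] at hratio
  simp only [negMulLog]
  nlinarith

lemma negMulLog_add_self_le_negMulLog_two_mul {q : ℝ} (hq : 0 ≤ q) (hqe : 4 * exp 1 * q ≤ 1) :
    negMulLog q + q ≤ negMulLog (2 * q) := by
  rcases hq.eq_or_lt with rfl | hq
  · simp
  -- `negMulLog (2 * q) - negMulLog q - q = -q * (log (4 * q) + 1)`
  have hlog : log (4 * q) ≤ -1 := by
    rw [log_le_iff_le_exp (by positivity), exp_neg, ← one_div, le_div_iff₀ (exp_pos 1)]
    linarith
  rw [log_mul (by norm_num) hq.ne', show (4 : ℝ) = 2 * 2 by norm_num,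
    log_mul two_ne_zero two_ne_zero] at hlog
  rw [negMulLog, negMulLog, log_mul two_ne_zero hq.ne']
  nlinarith

lemma mul_negMulLog_div {m : ℝ} (hm : 0 < m) (x : ℝ) :
    m * negMulLog (x / m) = negMulLog x + x * log m := by
  rw [div_eq_mul_inv, negMulLog_mul]
  simp only [negMulLog, log_inv]
  field_simp

section CondEntropy

variable {α β : Type*} [Fintype α] [Fintype β]

noncomputable def condEntropy (W : α × β → ℝ) : ℝ :=
  ∑ pr, negMulLog (W pr) - ∑ c, negMulLog (∑ d, W (c, d))

lemma condEntropy_eq_sum (W : α × β → ℝ) :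
    condEntropy W = ∑ c, (∑ d, negMulLog (W (c, d)) - negMulLog (∑ d, W (c, d))) := by
  rw [condEntropy, Fintype.sum_prod_type, ← Finset.sum_sub_distrib]

/-- A row carrying a single atom has conditional entropy zero. -/
lemma condEntropy_eq_of_eq_zero_off_diag [DecidableEq α] (W : α × α → ℝ) (z : α)
    (hW : ∀ c ≠ z, ∀ d ≠ c, W (c, d) = 0) :
    condEntropy W = ∑ d, negMulLog (W (z, d)) - negMulLog (∑ d, W (z, d)) := by
  rw [condEntropy_eq_sum, Fintype.sum_eq_single z]
  intro c hc
  rw [Fintype.sum_eq_single c fun d hd ↦ by rw [hW c hc d hd, negMulLog_zero],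
    Fintype.sum_eq_single c (hW c hc), sub_self]

lemma Fintype.sum_ite_eq_const {R : Type*} [Ring R] [DecidableEq α] (z : α) (x y : R) :
    ∑ d : α, (if d = z then x else y) = x + (Fintype.card α - 1) * y := by
  rw [Fintype.sum_eq_add_sum_compl z, if_pos rfl,
    Finset.sum_congr rfl fun d hd ↦ if_neg (by simpa using hd)]
  simp [Finset.card_compl, Nat.cast_sub (Fintype.card_pos_iff.2 ⟨z⟩)]

lemma condEntropy_eq_of_ite [DecidableEq α] (W : α × α → ℝ) (z : α) (x y : ℝ)
    (hz : ∀ d, W (z, d) = if d = z then x else y) (hW : ∀ c ≠ z, ∀ d ≠ c, W (c, d) = 0) :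
    condEntropy W = negMulLog x + (Fintype.card α - 1) * negMulLog y
      - negMulLog (x + (Fintype.card α - 1) * y) := by
  simp only [condEntropy_eq_of_eq_zero_off_diag W z hW, hz, apply_ite negMulLog,
    Fintype.sum_ite_eq_const]

end CondEntropy

section Dueck

variable {k η a : ℕ}

lemma dueckW_eq_zero_off_diag (ha : 2 ≤ a) :
    ∀ c ≠ (fun _ ↦ ⟨0, by omega⟩ : Fin k → Fin a), ∀ d ≠ c, dueckW k η a ha (c, d) = 0 := by
  intro c hc d hd
  simp [dueckW, hc, Ne.symm hd]

lemma dueckW_zero_left (ha : 2 ≤ a) (d : Fin k → Fin a) :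
    dueckW k η a ha ((fun _ ↦ ⟨0, by omega⟩), d) =
      if d = (fun _ ↦ ⟨0, by omega⟩) then ((k : ℝ) - 1) / k
      else 1 / (k * (a : ℝ) ^ (η * k) * ((a : ℝ) ^ k - 1)) := by
  by_cases hd : d = (fun _ ↦ ⟨0, by omega⟩) <;> simp [dueckW, hd, eq_comm]

lemma dueckCondEnt_eq (hk : 0 < k) (ha : 2 ≤ a) :
    dueckCondEnt k η a =
      negMulLog (((k : ℝ) - 1) / k) + negMulLog (1 / (k * (a : ℝ) ^ (η * k)))
        - negMulLog (((k : ℝ) - 1) / k + 1 / (k * (a : ℝ) ^ (η * k)))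
        + 1 / (k * (a : ℝ) ^ (η * k)) * log ((a : ℝ) ^ k - 1) := by
  have hcard : (Fintype.card (Fin k → Fin a) : ℝ) = (a : ℝ) ^ k := by simp
  have hN : 0 < (a : ℝ) ^ k - 1 := by
    have ha' : (2 : ℝ) ≤ a := by exact_mod_cast ha
    linarith [le_self_pow₀ (by linarith : (1 : ℝ) ≤ a) hk.ne']
  have hr : 1 / (k * (a : ℝ) ^ (η * k) * ((a : ℝ) ^ k - 1))
      = 1 / (k * (a : ℝ) ^ (η * k)) / ((a : ℝ) ^ k - 1) := by
    rw [div_div]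
  rw [dueckCondEnt, dif_pos ha]
  change condEntropy (dueckW k η a ha) = _
  rw [condEntropy_eq_of_ite _ _ _ _ (dueckW_zero_left ha) (dueckW_eq_zero_off_diag ha), hcard, hr,
    mul_negMulLog_div hN, mul_div_cancel₀ _ hN.ne']
  ring

lemma dueckCondEnt_nonneg (hk : 0 < k) (ha : 2 ≤ a) : 0 ≤ dueckCondEnt k η a := by
  have hp : 0 ≤ ((k : ℝ) - 1) / k := div_nonneg (by simp [Nat.one_le_cast.2 hk]) k.cast_nonneg
  have hq : 0 ≤ 1 / (k * (a : ℝ) ^ (η * k)) := by positivity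
  have hN : (2 : ℝ) ≤ (a : ℝ) ^ k := by exact_mod_cast ha.trans (Nat.le_self_pow hk.ne' a)
  have hlog : 0 ≤ log ((a : ℝ) ^ k - 1) := log_nonneg (by linarith)
  rw [dueckCondEnt_eq hk ha]
  linarith [negMulLog_add_le_s13 hp hq, mul_nonneg hq hlog]

lemma dueckCondEnt_le (hk : 2 ≤ k) (hη : 2 ≤ η) (ha : 2 ≤ a) :
    dueckCondEnt k η a
      ≤ binEnt (2 / (k * (a : ℝ) ^ (η * k))) + 2 * log a / (a : ℝ) ^ (η * k) := by
  set A := (a : ℝ) ^ (η * k) with hA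
  set q := 1 / (k * A) with hq
  have hk' : (2 : ℝ) ≤ k := by exact_mod_cast hk
  have ha' : (2 : ℝ) ≤ a := by exact_mod_cast ha
  have hA16 : 16 ≤ A := by
    calc (16 : ℝ) = 2 ^ 4 := by norm_num
      _ ≤ 2 ^ (η * k) := pow_le_pow_right₀ one_le_two (by nlinarith)
      _ ≤ A := pow_le_pow_left₀ zero_le_two ha' _
  have hq0 : 0 ≤ q := by positivity
  have hq32 : q ≤ 1 / 32 := one_div_le_one_div_of_le (by norm_num) (by nlinarith)
  have hqk : q ≤ 1 / k := one_div_le_one_div_of_le (by positivity) (by nlinarith)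
  have hp : ((k : ℝ) - 1) / k = 1 - 1 / k := by field_simp
  have hkinv : 1 / (k : ℝ) ≤ 1 / 2 := one_div_le_one_div_of_le two_pos hk'
  have he : 4 * exp 1 * q ≤ 1 := by nlinarith [exp_one_lt_d9]
  have hlog : q * log ((a : ℝ) ^ k - 1) ≤ 2 * log a / A := by
    have hN : (2 : ℝ) ≤ (a : ℝ) ^ k := by exact_mod_cast ha.trans (Nat.le_self_pow (by omega) a)
    have hloga : 0 ≤ log (a : ℝ) := log_nonneg (by linarith)
    calc q * log ((a : ℝ) ^ k - 1) ≤ q * log ((a : ℝ) ^ k) :=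
          mul_le_mul_of_nonneg_left (log_le_log (by linarith) (by linarith)) hq0
      _ = log a / A := by rw [log_pow, hq]; field_simp
      _ ≤ 2 * log a / A := by gcongr; linarith
  rw [dueckCondEnt_eq (by omega) ha, binEnt_eq_binEntropy,
    binEntropy_eq_negMulLog_add_negMulLog_one_sub, ← hA, ← hq, hp,
    show 2 / (k * A) = 2 * q by rw [hq]; ring]
  linarith [negMulLog_sub_negMulLog_add_le (p := 1 - 1 / k) (by linarith) hq0 (by linarith),
    negMulLog_add_self_le_negMulLog_two_mul hq0 he,
    negMulLog_nonneg (x := 1 - 2 * q) (by linarith) (by linarith)]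

end Dueck

lemma tendsto_log_div_pow_atTop {n : ℕ} (hn : n ≠ 0) :
    Tendsto (fun a : ℕ ↦ log a / (a : ℝ) ^ n) atTop (𝓝 0) := by
  have hlog : Tendsto (fun a : ℕ ↦ log a / a) atTop (𝓝 0) := by
    have := tendsto_pow_log_div_mul_add_atTop 1 0 1 one_ne_zero
    simp only [pow_one, one_mul, add_zero] at this
    exact this.comp tendsto_natCast_atTop_atTop
  refine tendsto_of_tendsto_of_tendsto_of_le_of_le' tendsto_const_nhds hlog ?_ ?_
  · filter_upwards [eventually_ge_atTop 1] with a ha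
    have := log_nonneg (Nat.one_le_cast.2 ha : (1 : ℝ) ≤ a)
    positivity
  · filter_upwards [eventually_ge_atTop 1] with a ha
    have ha' : (1 : ℝ) ≤ a := by exact_mod_cast ha
    exact div_le_div_of_nonneg_left (log_nonneg ha') (by linarith) (le_self_pow₀ ha' hn)

theorem stmt_13_general (k η : ℕ) (hk : 2 ≤ k) (hη : 6 ≤ η) :
    (∀ a : ℕ, 2 ≤ a →
      dueckCondEnt k η a
        ≤ binEnt (2 / ((k : ℝ) * (a : ℝ) ^ (η * k)))
            + 2 * Real.log (a : ℝ) / (a : ℝ) ^ (η * k)) ∧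
    Filter.Tendsto (fun a : ℕ => dueckCondEnt k η a) Filter.atTop (nhds 0) := by
  have hbound := fun a (ha : 2 ≤ a) ↦ dueckCondEnt_le (η := η) hk (by omega) ha
  refine ⟨hbound, ?_⟩
  have hηk : η * k ≠ 0 := by positivity
  have hbin : Tendsto (fun a : ℕ ↦ binEnt (2 / (k * (a : ℝ) ^ (η * k)))) atTop (𝓝 0) := by
    have hA := (tendsto_pow_atTop (α := ℝ) hηk).comp tendsto_natCast_atTop_atTop
    rw [binEnt_eq_binEntropy, ← binEntropy_zero]
    exact (binEntropy_continuous.tendsto 0).comp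
      (tendsto_const_nhds.div_atTop (hA.const_mul_atTop (by positivity : (0 : ℝ) < k)))
  have hlog : Tendsto (fun a : ℕ ↦ 2 * log a / (a : ℝ) ^ (η * k)) atTop (𝓝 0) := by
    simpa [mul_div_assoc] using (tendsto_log_div_pow_atTop hηk).const_mul 2
  refine tendsto_of_tendsto_of_tendsto_of_le_of_le' tendsto_const_nhds
    (by simpa using hbin.add hlog) ?_ ?_ <;> filter_upwards [eventually_ge_atTop 2] with a ha
  · exact dueckCondEnt_nonneg (by omega) ha
  · exact hbound a ha

/-- For Dueck's source, `H(S₂|S₁) ≤ h_b(2/(k a^{ηk})) + (2 log a)/a^{ηk}`; in particular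
`H(S₂|S₁) → 0` as `a → ∞` for fixed `k, η`. -/
theorem stmt_13 (k η : ℕ) (hk : 2 ≤ k) (hη : 6 ≤ η) (hηe : Even η) :
    (∀ a : ℕ, 2 ≤ a →
      dueckCondEnt k η a
        ≤ binEnt (2 / ((k : ℝ) * (a : ℝ) ^ (η * k)))
            + 2 * Real.log (a : ℝ) / (a : ℝ) ^ (η * k)) ∧
    Filter.Tendsto (fun a : ℕ => dueckCondEnt k η a) Filter.atTop (nhds 0) :=
  stmt_13_general k η hk hη
end

section
/- For the function 𝓛_l(μ, M) = (1/l)·h_b(μ) + μ·log M defined for μ ∈ [0,1] and M ≥ 1, and for parameters l = k⁴ a^{ηk/2}, φ ≤ 2k³ a^{-ηk/2}, M = a^k: for all sufficiently large a and k (with η ≥ 6 even), 𝓛_l(φ, a^k) ≤ α(h_b(α) + log a) where α = 8k⁴ a^{-ηk/3}; in particular 𝓛_l(φ, a^k) → 0 as a,k → ∞. -/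
open Finset

/-- The extra source-coding rate `𝓛_l(μ, M) = (1/l)·h_b(μ) + μ·log M`. -/
noncomputable def Ll (l : ℕ) (μ M : ℝ) : ℝ := (1 / (l : ℝ)) * binEnt μ + μ * Real.log M

lemma binEnt_eq (p : ℝ) : binEnt p = Real.binEntropy p := by
  simp [binEnt, Real.binEntropy, Real.log_inv]; ring

lemma key_nat : ∀ k : ℕ, 12 ≤ k → 8 * k ^ 4 * 2 ^ k ≤ 9 ^ k := by
  intro k hk
  induction k, hk using Nat.le_induction with
  | base => norm_num
  | succ n hn ih =>
    have e1 : 12 * n ^ 3 ≤ n * n ^ 3 := Nat.mul_le_mul_right _ hn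
    have e2 : 12 * n ^ 2 ≤ n * n ^ 2 := Nat.mul_le_mul_right _ hn
    have e3 : 12 * n ≤ n * n := Nat.mul_le_mul_right _ hn
    have h1 : 2 * (n + 1) ^ 4 ≤ 9 * n ^ 4 := by nlinarith
    calc 8 * (n + 1) ^ 4 * 2 ^ (n + 1) = (2 * (n + 1) ^ 4) * (8 * 2 ^ n) := by ring
      _ ≤ (9 * n ^ 4) * (8 * 2 ^ n) := Nat.mul_le_mul_right _ h1
      _ = 9 * (8 * n ^ 4 * 2 ^ n) := by ring
      _ ≤ 9 * 9 ^ n := Nat.mul_le_mul_left _ ih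
      _ = 9 ^ (n + 1) := by ring

set_option maxHeartbeats 1000000 in
/-- Core bound: the whole expression is at most `8k⁴ a^{-ηk/3} log a`. -/
lemma core (η a k : ℕ) (hη : 6 ≤ η) (hηe : Even η) (ha : 3 ≤ a) (hk : 12 ≤ k)
    (φ : ℝ) (hφ0 : 0 ≤ φ)
    (hφ : φ ≤ 2 * (k : ℝ) ^ 3 * (a : ℝ) ^ (-((η : ℝ) * (k : ℝ)) / 2)) :
    Ll (k ^ 4 * a ^ (η * k / 2)) φ ((a : ℝ) ^ k)
      ≤ 8 * (k : ℝ) ^ 4 * (a : ℝ) ^ (-((η : ℝ) * (k : ℝ)) / 3) * Real.log a := by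
  obtain ⟨m, hm⟩ := hηe
  have hηm : η = 2 * m := by omega
  have hm3 : 3 ≤ m := by omega
  have hA : (3 : ℝ) ≤ (a : ℝ) := by exact_mod_cast ha
  have hA1 : (1 : ℝ) ≤ (a : ℝ) := by linarith
  have hA0 : (0 : ℝ) < (a : ℝ) := by linarith
  have hk1 : (1 : ℝ) ≤ (k : ℝ) := by exact_mod_cast Nat.one_le_of_lt (by omega : 1 < k)
  set t : ℝ := (η : ℝ) * (k : ℝ) with ht
  have htk : 6 * (k : ℝ) ≤ t := by
    have h6 : (6 : ℝ) ≤ (η : ℝ) := by exact_mod_cast hη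
    have hk0 : (0 : ℝ) ≤ (k : ℝ) := by positivity
    nlinarith
  have ht0 : (0 : ℝ) ≤ t := by linarith
  have hlogA : (1 : ℝ) ≤ Real.log a := by
    calc (1 : ℝ) = Real.log (Real.exp 1) := by simp
      _ ≤ Real.log 3 := Real.log_le_log (Real.exp_pos 1)
          (by linarith [Real.exp_one_lt_d9])
      _ ≤ Real.log a := Real.log_le_log (by norm_num) hA
  have hlogA0 : (0 : ℝ) ≤ Real.log a := by linarith
  have hkey : (8 : ℝ) * (k : ℝ) ^ 4 * 2 ^ k ≤ 9 ^ k := by exact_mod_cast key_nat k hk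
  have h2k : (1 : ℝ) ≤ (2 : ℝ) ^ k := one_le_pow₀ (by norm_num)
  have hk4pos : (0 : ℝ) < (k : ℝ) ^ 4 := by positivity
  have hk41 : (1 : ℝ) ≤ (k : ℝ) ^ 4 := one_le_pow₀ hk1
  have h8k9 : 8 * (k : ℝ) ^ 4 ≤ 9 ^ k := by
    nlinarith [mul_nonneg hk4pos.le (sub_nonneg.mpr h2k)]
  have h9k : (9 : ℝ) ^ k ≤ (a : ℝ) ^ (t / 3) := by
    calc (9 : ℝ) ^ k = ((3 : ℝ) ^ 2) ^ k := by norm_num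
      _ = (3 : ℝ) ^ (2 * k) := by rw [← pow_mul]
      _ ≤ (a : ℝ) ^ (2 * k) := pow_le_pow_left₀ (by norm_num) hA _
      _ = (a : ℝ) ^ ((2 * k : ℕ) : ℝ) := (Real.rpow_natCast _ _).symm
      _ ≤ (a : ℝ) ^ (t / 3) := by
          apply Real.rpow_le_rpow_of_exponent_le hA1
          push_cast
          linarith
  have h9k2 : (9 : ℝ) ^ k ≤ (a : ℝ) ^ (t / 2) := by
    calc (9 : ℝ) ^ k = ((3 : ℝ) ^ 2) ^ k := by norm_num
      _ = (3 : ℝ) ^ (2 * k) := by rw [← pow_mul]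
      _ ≤ (a : ℝ) ^ (2 * k) := pow_le_pow_left₀ (by norm_num) hA _
      _ = (a : ℝ) ^ ((2 * k : ℕ) : ℝ) := (Real.rpow_natCast _ _).symm
      _ ≤ (a : ℝ) ^ (t / 2) := by
          apply Real.rpow_le_rpow_of_exponent_le hA1
          push_cast
          linarith
  have h27 : (2 : ℝ) * (k : ℝ) ^ 3 ≤ (a : ℝ) ^ (t / 2) := by
    have hk34 : (k : ℝ) ^ 3 ≤ (k : ℝ) ^ 4 := pow_le_pow_right₀ hk1 (by norm_num)
    calc (2 : ℝ) * (k : ℝ) ^ 3 ≤ 8 * (k : ℝ) ^ 4 := by linarith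
      _ ≤ 9 ^ k := h8k9
      _ ≤ _ := h9k2
  have hrpos2 : (0 : ℝ) < (a : ℝ) ^ (t / 2) := Real.rpow_pos_of_pos hA0 _
  have hphi1 : φ ≤ 1 := by
    have h1 : 2 * (k : ℝ) ^ 3 * (a : ℝ) ^ (-t / 2) ≤ 1 := by
      rw [show -t / 2 = -(t / 2) by ring, Real.rpow_neg hA0.le]
      have h2 := mul_le_mul_of_nonneg_right h27
        (by positivity : (0:ℝ) ≤ ((a : ℝ) ^ (t / 2))⁻¹)
      rwa [mul_inv_cancel₀ hrpos2.ne'] at h2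
    linarith
  have hbe : binEnt φ ≤ Real.log a := by
    rw [binEnt_eq]
    calc Real.binEntropy φ ≤ Real.log 2 := Real.binEntropy_le_log_two
      _ ≤ Real.log a := Real.log_le_log (by norm_num) (by linarith)
  have hdiv : η * k / 2 = m * k := by
    subst hηm; rw [Nat.mul_assoc, Nat.mul_div_cancel_left _ (by norm_num)]
  have hl : ((k ^ 4 * a ^ (η * k / 2) : ℕ) : ℝ) = (k : ℝ) ^ 4 * (a : ℝ) ^ (t / 2) := by
    rw [hdiv]
    push_cast
    congr 1
    rw [← Real.rpow_natCast (a : ℝ) (m * k)]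
    congr 1
    rw [ht, hηm]
    push_cast
    ring
  have hlpos : (0 : ℝ) < (k : ℝ) ^ 4 * (a : ℝ) ^ (t / 2) := by positivity
  have hinv : 1 / ((k : ℝ) ^ 4 * (a : ℝ) ^ (t / 2)) ≤ 6 * (k : ℝ) ^ 4 * (a : ℝ) ^ (-t / 3) := by
    rw [div_le_iff₀ hlpos]
    have hexp : (a : ℝ) ^ (-t / 3) * (a : ℝ) ^ (t / 2) = (a : ℝ) ^ (t / 6) := by
      rw [← Real.rpow_add hA0]; ring_nf
    have h1 : (1 : ℝ) ≤ (a : ℝ) ^ (t / 6) := by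
      rw [show (1:ℝ) = (a:ℝ) ^ (0:ℝ) by simp]
      exact Real.rpow_le_rpow_of_exponent_le hA1 (by linarith)
    have h2 : (1 : ℝ) ≤ (k : ℝ) ^ 4 * (k : ℝ) ^ 4 := by nlinarith
    have h3 : (1 : ℝ) * 1 ≤ ((k : ℝ) ^ 4 * (k : ℝ) ^ 4) * ((a : ℝ) ^ (t / 6)) :=
      mul_le_mul h2 h1 zero_le_one (by linarith)
    calc (1 : ℝ) ≤ 6 * (((k:ℝ)^4 * (k:ℝ)^4) * (a : ℝ) ^ (t / 6)) := by linarith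
      _ = 6 * (k : ℝ) ^ 4 * (a : ℝ) ^ (-t / 3) * ((k : ℝ) ^ 4 * (a : ℝ) ^ (t / 2)) := by
          rw [show 6 * (k : ℝ) ^ 4 * (a : ℝ) ^ (-t / 3) * ((k : ℝ) ^ 4 * (a : ℝ) ^ (t / 2))
            = 6 * (((k:ℝ)^4 * (k:ℝ)^4) * ((a : ℝ) ^ (-t / 3) * (a : ℝ) ^ (t / 2))) by ring,
            hexp]
  have hmono : (a : ℝ) ^ (-t / 2) ≤ (a : ℝ) ^ (-t / 3) :=
    Real.rpow_le_rpow_of_exponent_le hA1 (by linarith)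
  rw [Ll, hl, Real.log_pow]
  have hterm1 : 1 / ((k : ℝ) ^ 4 * (a : ℝ) ^ (t / 2)) * binEnt φ
      ≤ 6 * (k : ℝ) ^ 4 * (a : ℝ) ^ (-t / 3) * Real.log a := by
    have hbe0 : 0 ≤ binEnt φ := by
      rw [binEnt_eq]; exact Real.binEntropy_nonneg hφ0 hphi1
    calc 1 / ((k : ℝ) ^ 4 * (a : ℝ) ^ (t / 2)) * binEnt φ
        ≤ 6 * (k : ℝ) ^ 4 * (a : ℝ) ^ (-t / 3) * binEnt φ :=
          mul_le_mul_of_nonneg_right hinv hbe0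
      _ ≤ 6 * (k : ℝ) ^ 4 * (a : ℝ) ^ (-t / 3) * Real.log a := by
          apply mul_le_mul_of_nonneg_left hbe
          positivity
  have hterm2 : φ * ((k : ℕ) * Real.log a)
      ≤ 2 * (k : ℝ) ^ 4 * (a : ℝ) ^ (-t / 3) * Real.log a := by
    have hφ' : φ ≤ 2 * (k : ℝ) ^ 3 * (a : ℝ) ^ (-t / 3) :=
      hφ.trans (mul_le_mul_of_nonneg_left hmono (by positivity))
    have h0 : (0 : ℝ) ≤ (k : ℝ) * Real.log a := by positivity
    calc φ * ((k : ℕ) * Real.log a) = φ * ((k : ℝ) * Real.log a) := by norm_num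
      _ ≤ (2 * (k : ℝ) ^ 3 * (a : ℝ) ^ (-t / 3)) * ((k : ℝ) * Real.log a) :=
          mul_le_mul_of_nonneg_right hφ' h0
      _ = 2 * (k : ℝ) ^ 4 * (a : ℝ) ^ (-t / 3) * Real.log a := by ring
  have hsum : 6 * (k : ℝ) ^ 4 * (a : ℝ) ^ (-t / 3) * Real.log a
      + 2 * (k : ℝ) ^ 4 * (a : ℝ) ^ (-t / 3) * Real.log a
      = 8 * (k : ℝ) ^ 4 * (a : ℝ) ^ (-t / 3) * Real.log a := by ring
  linarith

/-- `α ≤ 1` under the same hypotheses. -/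
lemma alpha_le_one (η a k : ℕ) (hη : 6 ≤ η) (ha : 3 ≤ a) (hk : 12 ≤ k) :
    8 * (k : ℝ) ^ 4 * (a : ℝ) ^ (-((η : ℝ) * (k : ℝ)) / 3) ≤ 1 := by
  have hA : (3 : ℝ) ≤ (a : ℝ) := by exact_mod_cast ha
  have hA1 : (1 : ℝ) ≤ (a : ℝ) := by linarith
  have hA0 : (0 : ℝ) < (a : ℝ) := by linarith
  set t : ℝ := (η : ℝ) * (k : ℝ) with ht
  have htk : 6 * (k : ℝ) ≤ t := by
    have h6 : (6 : ℝ) ≤ (η : ℝ) := by exact_mod_cast hη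
    have hk0 : (0 : ℝ) ≤ (k : ℝ) := by positivity
    nlinarith
  have hkey : (8 : ℝ) * (k : ℝ) ^ 4 * 2 ^ k ≤ 9 ^ k := by exact_mod_cast key_nat k hk
  have h2k : (1 : ℝ) ≤ (2 : ℝ) ^ k := one_le_pow₀ (by norm_num)
  have hk4pos : (0 : ℝ) < (k : ℝ) ^ 4 := by positivity
  have h8k9 : 8 * (k : ℝ) ^ 4 ≤ 9 ^ k := by
    nlinarith [mul_nonneg hk4pos.le (sub_nonneg.mpr h2k)]
  have h9k : (9 : ℝ) ^ k ≤ (a : ℝ) ^ (t / 3) := by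
    calc (9 : ℝ) ^ k = ((3 : ℝ) ^ 2) ^ k := by norm_num
      _ = (3 : ℝ) ^ (2 * k) := by rw [← pow_mul]
      _ ≤ (a : ℝ) ^ (2 * k) := pow_le_pow_left₀ (by norm_num) hA _
      _ = (a : ℝ) ^ ((2 * k : ℕ) : ℝ) := (Real.rpow_natCast _ _).symm
      _ ≤ (a : ℝ) ^ (t / 3) := by
          apply Real.rpow_le_rpow_of_exponent_le hA1
          push_cast; linarith
  have hrpos : (0 : ℝ) < (a : ℝ) ^ (t / 3) := Real.rpow_pos_of_pos hA0 _
  rw [show -t / 3 = -(t / 3) by ring, Real.rpow_neg hA0.le]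
  have h2 := mul_le_mul_of_nonneg_right (h8k9.trans h9k)
    (by positivity : (0:ℝ) ≤ ((a : ℝ) ^ (t / 3))⁻¹)
  rwa [mul_inv_cancel₀ hrpos.ne'] at h2

set_option maxHeartbeats 1000000 in
/-- With `l = k⁴ a^{ηk/2}`, `φ ≤ 2k³ a^{−ηk/2}`, `M = a^k` and `η ≥ 6` even: for all
sufficiently large `a` and `k`, `𝓛_l(φ, a^k) ≤ α·(h_b(α) + log a)` where
`α = 8k⁴ a^{−ηk/3}`; in particular `𝓛_l(φ, a^k) → 0` as `a, k → ∞`. -/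
theorem stmt_16 (η : ℕ) (hη : 6 ≤ η) (hηe : Even η) :
    (∃ a0 k0 : ℕ, ∀ a k : ℕ, a0 ≤ a → k0 ≤ k → ∀ φ : ℝ, 0 ≤ φ →
        φ ≤ 2 * (k : ℝ) ^ 3 * (a : ℝ) ^ (-((η : ℝ) * (k : ℝ)) / 2) →
        Ll (k ^ 4 * a ^ (η * k / 2)) φ ((a : ℝ) ^ k)
          ≤ 8 * (k : ℝ) ^ 4 * (a : ℝ) ^ (-((η : ℝ) * (k : ℝ)) / 3) *
              (binEnt (8 * (k : ℝ) ^ 4 * (a : ℝ) ^ (-((η : ℝ) * (k : ℝ)) / 3))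
                + Real.log (a : ℝ))) ∧
    (∀ ε : ℝ, 0 < ε → ∃ a0 k0 : ℕ, ∀ a k : ℕ, a0 ≤ a → k0 ≤ k → ∀ φ : ℝ, 0 ≤ φ →
        φ ≤ 2 * (k : ℝ) ^ 3 * (a : ℝ) ^ (-((η : ℝ) * (k : ℝ)) / 2) →
        Ll (k ^ 4 * a ^ (η * k / 2)) φ ((a : ℝ) ^ k) ≤ ε) := by
  constructor
  · refine ⟨3, 12, fun a k ha hk φ hφ0 hφ => ?_⟩
    have hA0 : (0 : ℝ) < (a : ℝ) := by
      have : (3 : ℝ) ≤ (a : ℝ) := by exact_mod_cast ha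
      linarith
    set α := 8 * (k : ℝ) ^ 4 * (a : ℝ) ^ (-((η : ℝ) * (k : ℝ)) / 3) with hα
    have hα0 : 0 ≤ α := by positivity
    have hα1 : α ≤ 1 := alpha_le_one η a k hη ha hk
    have hbe0 : 0 ≤ binEnt α := by
      rw [binEnt_eq]; exact Real.binEntropy_nonneg hα0 hα1
    calc Ll (k ^ 4 * a ^ (η * k / 2)) φ ((a : ℝ) ^ k)
        ≤ α * Real.log a := core η a k hη hηe ha hk φ hφ0 hφ
      _ ≤ α * (binEnt α + Real.log a) := by nlinarith
  · intro ε hε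
    obtain ⟨n, hn⟩ := pow_unbounded_of_one_lt (3 / ε) (by norm_num : (1:ℝ) < 2)
    refine ⟨3, max 12 n, fun a k ha hk φ hφ0 hφ => ?_⟩
    have hk12 : 12 ≤ k := le_trans (le_max_left _ _) hk
    have hkn : n ≤ k := le_trans (le_max_right _ _) hk
    have hA : (3 : ℝ) ≤ (a : ℝ) := by exact_mod_cast ha
    have hA1 : (1 : ℝ) ≤ (a : ℝ) := by linarith
    have hA0 : (0 : ℝ) < (a : ℝ) := by linarith
    have core' := core η a k hη hηe ha hk12 φ hφ0 hφ
    set t : ℝ := (η : ℝ) * (k : ℝ) with ht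
    have htk : 6 * (k : ℝ) ≤ t := by
      have h6 : (6 : ℝ) ≤ (η : ℝ) := by exact_mod_cast hη
      have hk0 : (0 : ℝ) ≤ (k : ℝ) := by positivity
      nlinarith
    have hlogA : Real.log a ≤ (a : ℝ) := by
      linarith [Real.log_le_sub_one_of_pos hA0]
    have hlogA0 : 0 ≤ Real.log a := Real.log_nonneg hA1
    have hmono : (a : ℝ) ^ (-t / 3) ≤ (a : ℝ) ^ (-(2 * (k : ℝ))) :=
      Real.rpow_le_rpow_of_exponent_le hA1 (by linarith)
    have hk0' : (0 : ℝ) ≤ (k : ℝ) := by positivity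
    have hkey : (8 : ℝ) * (k : ℝ) ^ 4 * 2 ^ k ≤ 9 ^ k := by exact_mod_cast key_nat k hk12
    have h2kpos : (0 : ℝ) < (2 : ℝ) ^ k := by positivity
    have hstep : 8 * (k : ℝ) ^ 4 * (a : ℝ) ^ (-t / 3) * Real.log a ≤ 3 / 2 ^ k := by
      have e1 : (a : ℝ) ^ (-(2 * (k : ℝ))) = 1 / (a : ℝ) ^ (2 * k : ℕ) := by
        rw [Real.rpow_neg hA0.le, ← Real.rpow_natCast (a:ℝ) (2*k), one_div]
        congr 2
        push_cast
        ring
      have hapow : (0:ℝ) < (a : ℝ) ^ (2 * k : ℕ) := by positivity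
      have hb : 8 * (k : ℝ) ^ 4 * (a : ℝ) ^ (-t / 3) * Real.log a
          ≤ 8 * (k : ℝ) ^ 4 * (a : ℝ) / (a : ℝ) ^ (2 * k : ℕ) := by
        have r1 : (0:ℝ) ≤ (a : ℝ) ^ (-(2 * (k:ℝ))) := (Real.rpow_pos_of_pos hA0 _).le
        have hmul : 8 * (k : ℝ) ^ 4 * (a : ℝ) ^ (-t / 3) ≤
            8 * (k : ℝ) ^ 4 * (a : ℝ) ^ (-(2 * (k : ℝ))) :=
          mul_le_mul_of_nonneg_left hmono (by positivity)
        calc 8 * (k : ℝ) ^ 4 * (a : ℝ) ^ (-t / 3) * Real.log a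
            ≤ 8 * (k : ℝ) ^ 4 * (a : ℝ) ^ (-(2 * (k : ℝ))) * (a : ℝ) :=
              mul_le_mul hmul hlogA hlogA0 (by positivity)
          _ = 8 * (k : ℝ) ^ 4 * (a : ℝ) / (a : ℝ) ^ (2 * k : ℕ) := by
              rw [e1]; ring
      refine hb.trans ?_
      rw [div_le_div_iff₀ hapow h2kpos]
      have hk1 : 1 ≤ k := by omega
      have h3le : (3:ℝ)^(2*k-1) ≤ (a:ℝ)^(2*k-1) := pow_le_pow_left₀ (by norm_num) hA _
      have ha2k : (a : ℝ) * (3:ℝ)^(2*k-1) ≤ (a : ℝ) ^ (2 * k) := by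
        calc (a : ℝ) * (3:ℝ)^(2*k-1) ≤ (a : ℝ) * (a:ℝ)^(2*k-1) := by nlinarith
          _ = (a : ℝ) ^ (2 * k) := by
              rw [← pow_succ']
              congr 1
              omega
      have h9 : (9:ℝ)^k = 3 * (3:ℝ)^(2*k-1) := by
        rw [show (9:ℝ) = 3^2 by norm_num, ← pow_mul,
          show 3 * (3:ℝ)^(2*k-1) = (3:ℝ)^(2*k-1+1) by rw [pow_succ]; ring]
        congr 1
        omega
      calc 8 * (k : ℝ) ^ 4 * (a : ℝ) * 2 ^ k
          = (8 * (k : ℝ) ^ 4 * 2 ^ k) * (a : ℝ) := by ring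
        _ ≤ (9:ℝ)^k * (a : ℝ) := by nlinarith
        _ = 3 * ((a : ℝ) * (3:ℝ)^(2*k-1)) := by rw [h9]; ring
        _ ≤ 3 * (a : ℝ) ^ (2 * k) := by nlinarith
    have hfin : (3 : ℝ) / 2 ^ k ≤ ε := by
      rw [div_le_iff₀ h2kpos]
      have h2n : (2:ℝ)^n ≤ (2:ℝ)^k := pow_le_pow_right₀ (by norm_num) hkn
      have hlt : 3 / ε < (2:ℝ)^k := lt_of_lt_of_le hn h2n
      rw [div_lt_iff₀ hε] at hlt
      linarith
    linarith
end

section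
/- If (S_1,S_2,Q,W_1,W_2,X_1,U_1,X_2,U_2,Y) has pmf W_{S_1S_2}·p_Q·p_{W_1|Q}·p_{W_2|Q}·p_{X_1U_1|S_1W_1Q}·p_{X_2U_2|S_2W_2Q}·W_{Y|X_1U_1X_2U_2}, then I(S_1X_1U_1; Y|Q,W_1,W_2) + I(W_1S_2X_2U_2; Y|Q) − I(S_1;S_2) ≤ I(X_1U_1X_2U_2; Y|Q). -/
open Finset

/-- Conditional mutual information `I(A;B|C)` of the pushforwards of `P`. -/
noncomputable def cmi {Ω A B C : Type*} [Fintype Ω] [Fintype A] [Fintype B] [Fintype C]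
    [DecidableEq A] [DecidableEq B] [DecidableEq C]
    (P : Ω → ℝ) (fa : Ω → A) (fb : Ω → B) (fc : Ω → C) : ℝ :=
  pEnt P (fun ω => (fa ω, fc ω)) + pEnt P (fun ω => (fb ω, fc ω))
    - pEnt P (fun ω => (fa ω, fb ω, fc ω)) - pEnt P fc

/-- Mutual information `I(A;B)` of the pushforwards of `P`. -/
noncomputable def mi {Ω A B : Type*} [Fintype Ω] [Fintype A] [Fintype B]
    [DecidableEq A] [DecidableEq B] (P : Ω → ℝ) (fa : Ω → A) (fb : Ω → B) : ℝ :=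
  pEnt P fa + pEnt P fb - pEnt P (fun ω => (fa ω, fb ω))

set_option maxHeartbeats 2000000

section auxSection
variable {Ω : Type*} [Fintype Ω]

/-- Marginal (pushforward mass) of `P` under `f` at the point `c`. -/
noncomputable def mrg {γ : Type*} [DecidableEq γ] (P : Ω → ℝ) (f : Ω → γ) (c : γ) : ℝ :=
  ∑ ω : Ω, if f ω = c then P ω else 0

lemma pos_left {x y : ℝ} (hx : 0 ≤ x) (hy : 0 ≤ y) (h : 0 < x * y) : 0 < x := by
  rcases hx.eq_or_lt with e | e
  · exfalso; rw [← e, zero_mul] at h; exact lt_irrefl 0 h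
  · exact e

lemma pos_right {x y : ℝ} (hx : 0 ≤ x) (hy : 0 ≤ y) (h : 0 < x * y) : 0 < y := by
  rcases hy.eq_or_lt with e | e
  · exfalso; rw [← e, mul_zero] at h; exact lt_irrefl 0 h
  · exact e

lemma mrg_nonneg {γ : Type*} [DecidableEq γ] {P : Ω → ℝ} (hP : ∀ ω, 0 ≤ P ω)
    (f : Ω → γ) (c : γ) : 0 ≤ mrg P f c := by
  unfold mrg
  refine Finset.sum_nonneg fun ω _ => ?_
  split
  · exact hP ω
  · exact le_refl 0

lemma le_mrg {γ : Type*} [DecidableEq γ] {P : Ω → ℝ} (hP : ∀ ω, 0 ≤ P ω)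
    (f : Ω → γ) (ω : Ω) : P ω ≤ mrg P f (f ω) := by
  unfold mrg
  have h := Finset.single_le_sum (s := (univ : Finset Ω))
    (f := fun ω' => if f ω' = f ω then P ω' else 0)
    (fun ω' _ => by
      split
      · exact hP ω'
      · exact le_refl 0)
    (Finset.mem_univ ω)
  simpa using h

lemma mrg_le_mrg' {γ δ : Type*} [DecidableEq γ] [DecidableEq δ] {P : Ω → ℝ}
    (hP : ∀ ω, 0 ≤ P ω) (f : Ω → γ) (g : Ω → δ) (v : γ) (w : δ)
    (h : ∀ ω', f ω' = v → g ω' = w) :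
    mrg P f v ≤ mrg P g w := by
  unfold mrg
  refine Finset.sum_le_sum fun ω' _ => ?_
  by_cases hf : f ω' = v
  · rw [if_pos hf, if_pos (h ω' hf)]
  · rw [if_neg hf]
    split
    · exact hP ω'
    · exact le_refl 0

lemma mrg_congr' {γ δ : Type*} [DecidableEq γ] [DecidableEq δ] (P : Ω → ℝ)
    (f : Ω → γ) (g : Ω → δ) (v : γ) (w : δ) (h : ∀ ω', f ω' = v ↔ g ω' = w) :
    mrg P f v = mrg P g w := by
  unfold mrg
  exact Finset.sum_congr rfl fun ω' _ => if_congr (h ω') rfl rfl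

lemma pEnt_eq_sum {γ : Type*} [Fintype γ] [DecidableEq γ] (P : Ω → ℝ) (f : Ω → γ) :
    pEnt P f = ∑ ω, P ω * (-Real.log (mrg P f (f ω))) := by
  unfold pEnt
  calc ∑ c : γ, Real.negMulLog (∑ ω, if f ω = c then P ω else 0)
      = ∑ c : γ, ∑ ω, (if f ω = c then P ω * (-Real.log (mrg P f c)) else 0) := by
        refine Finset.sum_congr rfl fun c _ => ?_
        have h : ∀ ω, (if f ω = c then P ω * (-Real.log (mrg P f c)) else 0)
            = (if f ω = c then P ω else 0) * (-Real.log (mrg P f c)) := by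
          intro ω; split <;> simp
        rw [Finset.sum_congr rfl fun ω _ => h ω, ← Finset.sum_mul, Real.negMulLog, mrg]
        ring
    _ = ∑ ω, ∑ c : γ, (if f ω = c then P ω * (-Real.log (mrg P f c)) else 0) :=
        Finset.sum_comm
    _ = ∑ ω, P ω * (-Real.log (mrg P f (f ω))) := by
        refine Finset.sum_congr rfl fun ω _ => ?_
        simp [Finset.sum_ite_eq]

lemma sum_mrg {γ : Type*} [Fintype γ] [DecidableEq γ] (P : Ω → ℝ) (f : Ω → γ) :
    ∑ c, mrg P f c = ∑ ω, P ω := by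
  unfold mrg
  rw [Finset.sum_comm]
  exact Finset.sum_congr rfl fun ω _ => by simp [Finset.sum_ite_eq]

lemma sum_mul_comp {γ : Type*} [Fintype γ] [DecidableEq γ] (P : Ω → ℝ) (f : Ω → γ)
    (R : γ → ℝ) : ∑ ω, P ω * R (f ω) = ∑ c, mrg P f c * R c := by
  unfold mrg
  have h : ∀ c, (∑ ω, if f ω = c then P ω else 0) * R c
      = ∑ ω, (if f ω = c then P ω * R c else 0) := by
    intro c
    rw [Finset.sum_mul]
    exact Finset.sum_congr rfl fun ω _ => by split <;> simp
  rw [Finset.sum_congr rfl fun c _ => h c, Finset.sum_comm]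
  exact Finset.sum_congr rfl fun ω _ => by simp [Finset.sum_ite_eq]

/-- Nonnegativity of conditional mutual information. -/
lemma cmi_nonneg {A B C : Type*} [Fintype A] [Fintype B] [Fintype C]
    [DecidableEq A] [DecidableEq B] [DecidableEq C]
    (P : Ω → ℝ) (hP : ∀ ω, 0 ≤ P ω) (fa : Ω → A) (fb : Ω → B) (fc : Ω → C) :
    0 ≤ cmi P fa fb fc := by
  classical
  let pac := mrg P (fun ω => (fa ω, fc ω))
  let pbc := mrg P (fun ω => (fb ω, fc ω))
  let pabc := mrg P (fun ω => (fa ω, fb ω, fc ω))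
  let pc := mrg P fc
  let R : A × B × C → ℝ := fun v => pac (v.1, v.2.2) * pbc (v.2.1, v.2.2) / (pabc v * pc v.2.2)
  have hcmi : cmi P fa fb fc = -∑ ω, P ω * (Real.log (pac (fa ω, fc ω))
      + Real.log (pbc (fb ω, fc ω)) - Real.log (pabc (fa ω, fb ω, fc ω))
      - Real.log (pc (fc ω))) := by
    unfold cmi
    rw [pEnt_eq_sum, pEnt_eq_sum, pEnt_eq_sum, pEnt_eq_sum,
      ← Finset.sum_add_distrib, ← Finset.sum_sub_distrib, ← Finset.sum_sub_distrib,
      ← Finset.sum_neg_distrib]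
    exact Finset.sum_congr rfl fun ω _ => by ring
  rw [hcmi, neg_nonneg]
  have key : ∀ ω ∈ (univ : Finset Ω), P ω * (Real.log (pac (fa ω, fc ω))
      + Real.log (pbc (fb ω, fc ω)) - Real.log (pabc (fa ω, fb ω, fc ω))
      - Real.log (pc (fc ω))) ≤ P ω * R (fa ω, fb ω, fc ω) - P ω := by
    intro ω _
    rcases (hP ω).eq_or_lt with h0 | h0
    · rw [← h0]; simp
    · have h1 : 0 < pabc (fa ω, fb ω, fc ω) := lt_of_lt_of_le h0 (le_mrg hP _ ω)
      have h2 : pabc (fa ω, fb ω, fc ω) ≤ pac (fa ω, fc ω) :=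
        mrg_le_mrg' hP _ _ _ _ (fun ω' h => by
          simp only [Prod.mk.injEq] at h ⊢; tauto)
      have h3 : pabc (fa ω, fb ω, fc ω) ≤ pbc (fb ω, fc ω) :=
        mrg_le_mrg' hP _ _ _ _ (fun ω' h => by
          simp only [Prod.mk.injEq] at h ⊢; tauto)
      have h4 : pabc (fa ω, fb ω, fc ω) ≤ pc (fc ω) :=
        mrg_le_mrg' hP _ _ _ _ (fun ω' h => by
          simp only [Prod.mk.injEq] at h; tauto)
      have h2' : 0 < pac (fa ω, fc ω) := lt_of_lt_of_le h1 h2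
      have h3' : 0 < pbc (fb ω, fc ω) := lt_of_lt_of_le h1 h3
      have h4' : 0 < pc (fc ω) := lt_of_lt_of_le h1 h4
      have hlog : Real.log (pac (fa ω, fc ω)) + Real.log (pbc (fb ω, fc ω))
          - Real.log (pabc (fa ω, fb ω, fc ω)) - Real.log (pc (fc ω))
          = Real.log (R (fa ω, fb ω, fc ω)) := by
        show _ = Real.log (pac (fa ω, fc ω) * pbc (fb ω, fc ω)
          / (pabc (fa ω, fb ω, fc ω) * pc (fc ω)))
        rw [Real.log_div (by positivity) (by positivity), Real.log_mul h2'.ne' h3'.ne',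
          Real.log_mul h1.ne' h4'.ne']
        ring
      have hRpos : 0 < R (fa ω, fb ω, fc ω) := by
        show 0 < pac (fa ω, fc ω) * pbc (fb ω, fc ω)
          / (pabc (fa ω, fb ω, fc ω) * pc (fc ω))
        positivity
      calc P ω * (Real.log (pac (fa ω, fc ω)) + Real.log (pbc (fb ω, fc ω))
          - Real.log (pabc (fa ω, fb ω, fc ω)) - Real.log (pc (fc ω)))
          = P ω * Real.log (R (fa ω, fb ω, fc ω)) := by rw [hlog]
        _ ≤ P ω * (R (fa ω, fb ω, fc ω) - 1) :=
            mul_le_mul_of_nonneg_left (Real.log_le_sub_one_of_pos hRpos) h0.le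
        _ = P ω * R (fa ω, fb ω, fc ω) - P ω := by ring
  calc ∑ ω, P ω * (Real.log (pac (fa ω, fc ω)) + Real.log (pbc (fb ω, fc ω))
        - Real.log (pabc (fa ω, fb ω, fc ω)) - Real.log (pc (fc ω)))
      ≤ ∑ ω, (P ω * R (fa ω, fb ω, fc ω) - P ω) := Finset.sum_le_sum key
    _ = ∑ ω, P ω * R ((fun ω => (fa ω, fb ω, fc ω)) ω) - ∑ ω, P ω := by
        rw [Finset.sum_sub_distrib]
    _ = ∑ v, pabc v * R v - ∑ ω, P ω := by
        rw [sum_mul_comp P (fun ω => (fa ω, fb ω, fc ω)) R]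
    _ ≤ ∑ v : A × B × C, pac (v.1, v.2.2) * pbc (v.2.1, v.2.2) / pc v.2.2 - ∑ ω, P ω := by
        refine sub_le_sub_right (Finset.sum_le_sum fun v _ => ?_) _
        rcases (mrg_nonneg hP (fun ω => (fa ω, fb ω, fc ω)) v).eq_or_lt with hv | hv
        · have hv' : pabc v = 0 := hv.symm
          rw [hv', zero_mul]
          have h1 := mrg_nonneg hP (fun ω => (fa ω, fc ω)) (v.1, v.2.2)
          have h2 := mrg_nonneg hP (fun ω => (fb ω, fc ω)) (v.2.1, v.2.2)
          have h3 := mrg_nonneg hP fc v.2.2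
          positivity
        · have hv' : 0 < pabc v := hv
          have hc : 0 < pc v.2.2 := lt_of_lt_of_le hv'
            (mrg_le_mrg' hP (fun ω => (fa ω, fb ω, fc ω)) fc v v.2.2
              (fun ω' h => by rw [← h]))
          show pabc v * (pac (v.1, v.2.2) * pbc (v.2.1, v.2.2) / (pabc v * pc v.2.2)) ≤ _
          rw [mul_div_assoc', mul_div_mul_left _ _ hv'.ne']
    _ = ∑ c, (pc c * pc c / pc c) - ∑ ω, P ω := by
        congr 1
        have hsa : ∀ c, ∑ a, pac (a, c) = pc c := by
          intro c
          show ∑ a, mrg P (fun ω => (fa ω, fc ω)) (a, c) = mrg P fc c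
          unfold mrg
          rw [Finset.sum_comm]
          refine Finset.sum_congr rfl fun ω _ => ?_
          simp [Prod.mk.injEq, ite_and, Finset.sum_ite_eq]
        have hsb : ∀ c, ∑ b, pbc (b, c) = pc c := by
          intro c
          show ∑ b, mrg P (fun ω => (fb ω, fc ω)) (b, c) = mrg P fc c
          unfold mrg
          rw [Finset.sum_comm]
          refine Finset.sum_congr rfl fun ω _ => ?_
          simp [Prod.mk.injEq, ite_and, Finset.sum_ite_eq]
        rw [Fintype.sum_prod_type]
        simp_rw [Fintype.sum_prod_type]
        calc ∑ a, ∑ b, ∑ c, pac (a, c) * pbc (b, c) / pc c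
            = ∑ a, ∑ c, ∑ b, pac (a, c) * pbc (b, c) / pc c :=
              Finset.sum_congr rfl fun a _ => Finset.sum_comm
          _ = ∑ c, ∑ a, ∑ b, pac (a, c) * pbc (b, c) / pc c := Finset.sum_comm
          _ = ∑ c, pc c * pc c / pc c := by
              refine Finset.sum_congr rfl fun c _ => ?_
              calc ∑ a, ∑ b, pac (a, c) * pbc (b, c) / pc c
                  = ∑ a, pac (a, c) * (∑ b, pbc (b, c)) / pc c := by
                    refine Finset.sum_congr rfl fun a _ => ?_
                    rw [← Finset.sum_div, ← Finset.mul_sum]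
                _ = ∑ a, pac (a, c) * pc c / pc c := by rw [hsb c]
                _ = (∑ a, pac (a, c)) * pc c / pc c := by
                    rw [← Finset.sum_div, ← Finset.sum_mul]
                _ = pc c * pc c / pc c := by rw [hsa c]
    _ ≤ ∑ c, pc c - ∑ ω, P ω := by
        refine sub_le_sub_right (Finset.sum_le_sum fun c _ => ?_) _
        rcases (mrg_nonneg hP fc c).eq_or_lt with hc | hc
        · have hc' : pc c = 0 := hc.symm
          rw [hc']
          simp
        · have hc' : (0:ℝ) < pc c := hc
          rw [mul_div_assoc, div_self hc'.ne', mul_one]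
    _ = 0 := by rw [sum_mrg]; ring

end auxSection

/-- If `(S₁,S₂,Q,W₁,W₂,(X₁,U₁),(X₂,U₂),Y)` has the pmf
`W_{S₁S₂}·p_Q·p_{W₁|Q}·p_{W₂|Q}·p_{X₁U₁|S₁W₁Q}·p_{X₂U₂|S₂W₂Q}·W_{Y|X₁U₁X₂U₂}`, then
`I(S₁X₁U₁; Y | Q,W₁,W₂) + I(W₁S₂X₂U₂; Y | Q) − I(S₁;S₂) ≤ I(X₁U₁X₂U₂; Y | Q)`. -/
theorem stmt_17 {S1 S2 Q W1 W2 X1 U1 X2 U2 Y : Type*}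
    [Fintype S1] [Fintype S2] [Fintype Q] [Fintype W1] [Fintype W2]
    [Fintype X1] [Fintype U1] [Fintype X2] [Fintype U2] [Fintype Y]
    [DecidableEq S1] [DecidableEq S2] [DecidableEq Q] [DecidableEq W1] [DecidableEq W2]
    [DecidableEq X1] [DecidableEq U1] [DecidableEq X2] [DecidableEq U2] [DecidableEq Y]
    (Ws : S1 × S2 → ℝ) (hWs0 : ∀ z, 0 ≤ Ws z) (hWs1 : ∑ z, Ws z = 1)
    (pQ : Q → ℝ) (hQ0 : ∀ z, 0 ≤ pQ z) (hQ1 : ∑ z, pQ z = 1)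
    (pW1 : W1 → Q → ℝ) (hW10 : ∀ w q, 0 ≤ pW1 w q) (hW11 : ∀ q, ∑ w, pW1 w q = 1)
    (pW2 : W2 → Q → ℝ) (hW20 : ∀ w q, 0 ≤ pW2 w q) (hW21 : ∀ q, ∑ w, pW2 w q = 1)
    (pXU1 : X1 × U1 → S1 → W1 → Q → ℝ) (hXU10 : ∀ z s w q, 0 ≤ pXU1 z s w q)
    (hXU11 : ∀ s w q, ∑ z, pXU1 z s w q = 1)
    (pXU2 : X2 × U2 → S2 → W2 → Q → ℝ) (hXU20 : ∀ z s w q, 0 ≤ pXU2 z s w q)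
    (hXU21 : ∀ s w q, ∑ z, pXU2 z s w q = 1)
    (Wch : Y → X1 × U1 → X2 × U2 → ℝ) (hch0 : ∀ y z1 z2, 0 ≤ Wch y z1 z2)
    (hch1 : ∀ z1 z2, ∑ y, Wch y z1 z2 = 1)
    (P : S1 × S2 × Q × W1 × W2 × (X1 × U1) × (X2 × U2) × Y → ℝ)
    (hP : ∀ s1 s2 q w1 w2 z1 z2 y,
      P (s1, s2, q, w1, w2, z1, z2, y)
        = Ws (s1, s2) * pQ q * pW1 w1 q * pW2 w2 q * pXU1 z1 s1 w1 q *
            pXU2 z2 s2 w2 q * Wch y z1 z2) :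
    cmi P (fun ω => (ω.1, ω.2.2.2.2.2.1)) (fun ω => ω.2.2.2.2.2.2.2)
        (fun ω => (ω.2.2.1, ω.2.2.2.1, ω.2.2.2.2.1))
      + cmi P (fun ω => (ω.2.2.2.1, ω.2.1, ω.2.2.2.2.2.2.1))
          (fun ω => ω.2.2.2.2.2.2.2) (fun ω => ω.2.2.1)
      - mi P (fun ω => ω.1) (fun ω => ω.2.1)
      ≤ cmi P (fun ω => (ω.2.2.2.2.2.1, ω.2.2.2.2.2.2.1))
          (fun ω => ω.2.2.2.2.2.2.2) (fun ω => ω.2.2.1) := by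
  classical
  have hP0 : ∀ ω, 0 ≤ P ω := by
    rintro ⟨s1, s2, q, w1, w2, z1, z2, y⟩
    rw [hP]
    have h1 := hWs0 (s1, s2); have h2 := hQ0 q; have h3 := hW10 w1 q
    have h4 := hW20 w2 q; have h5 := hXU10 z1 s1 w1 q; have h6 := hXU20 z2 s2 w2 q
    have h7 := hch0 y z1 z2
    positivity
  have hXU11' : ∀ s w q, ∑ x, ∑ u, pXU1 (x, u) s w q = 1 := fun s w q => by
    have h := hXU11 s w q; rwa [Fintype.sum_prod_type] at h
  have hXU21' : ∀ s w q, ∑ x, ∑ u, pXU2 (x, u) s w q = 1 := fun s w q => by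
    have h := hXU21 s w q; rwa [Fintype.sum_prod_type] at h
  have hWs1' : ∑ a, ∑ b, Ws (a, b) = 1 := by
    have h := hWs1; rwa [Fintype.sum_prod_type] at h
  -- marginal computations
  have hM1 : ∀ a, mrg P (fun ω => ω.1) a = ∑ b', Ws (a, b') := by
    intro a
    unfold mrg
    simp_rw [Fintype.sum_prod_type]
    simp only [hP, Prod.mk.injEq, ite_and, Finset.sum_ite_irrel, Finset.sum_const_zero,
      Finset.sum_ite_eq', Finset.mem_univ, if_true]
    simp only [← Finset.mul_sum, ← Finset.sum_mul, hch1, hXU11', hXU21', hW11, hW21, hQ1,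
      hWs1', mul_one, one_mul]
  have hM2 : ∀ b, mrg P (fun ω => ω.2.1) b = ∑ a', Ws (a', b) := by
    intro b
    unfold mrg
    simp_rw [Fintype.sum_prod_type]
    simp only [hP, Prod.mk.injEq, ite_and, Finset.sum_ite_irrel, Finset.sum_const_zero,
      Finset.sum_ite_eq', Finset.mem_univ, if_true]
    simp only [← Finset.mul_sum, ← Finset.sum_mul, hch1, hXU11', hXU21', hW11, hW21, hQ1,
      hWs1', mul_one, one_mul]
  have hM3 : ∀ a b, mrg P (fun ω => (ω.1, ω.2.1)) (a, b) = Ws (a, b) := by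
    intro a b
    unfold mrg
    simp_rw [Fintype.sum_prod_type]
    simp only [hP, Prod.mk.injEq, ite_and, Finset.sum_ite_irrel, Finset.sum_const_zero,
      Finset.sum_ite_eq', Finset.mem_univ, if_true]
    simp only [← Finset.mul_sum, ← Finset.sum_mul, hch1, hXU11', hXU21', hW11, hW21, hQ1,
      hWs1', mul_one, one_mul]
  have hM4 : ∀ qq ww1 ww2, mrg P (fun ω => (ω.2.2.1, ω.2.2.2.1, ω.2.2.2.2.1)) (qq, ww1, ww2)
      = pQ qq * pW1 ww1 qq * pW2 ww2 qq := by
    intro qq ww1 ww2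
    unfold mrg
    simp_rw [Fintype.sum_prod_type]
    simp only [hP, Prod.mk.injEq, ite_and, Finset.sum_ite_irrel, Finset.sum_const_zero,
      Finset.sum_ite_eq', Finset.mem_univ, if_true]
    simp only [← Finset.mul_sum, ← Finset.sum_mul, hch1, hXU11', hXU21', hW11, hW21, hQ1,
      hWs1', mul_one, one_mul]
  have hM5 : ∀ a x1v u1v qq ww1 ww2,
      mrg P (fun ω => ((ω.1, ω.2.2.2.2.2.1), (ω.2.2.1, ω.2.2.2.1, ω.2.2.2.2.1)))
        ((a, (x1v, u1v)), (qq, ww1, ww2))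
      = (∑ b', Ws (a, b')) * pQ qq * pW1 ww1 qq * pW2 ww2 qq * pXU1 (x1v, u1v) a ww1 qq := by
    intro a x1v u1v qq ww1 ww2
    unfold mrg
    simp_rw [Fintype.sum_prod_type]
    simp only [hP, Prod.mk.injEq, ite_and, Finset.sum_ite_irrel, Finset.sum_const_zero,
      Finset.sum_ite_eq', Finset.mem_univ, if_true]
    simp only [← Finset.mul_sum, ← Finset.sum_mul, hch1, hXU11', hXU21', hW11, hW21, hQ1,
      hWs1', mul_one, one_mul]
  have hM6 : ∀ ww2 qq ww1 b x2v u2v,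
      mrg P (fun ω => (ω.2.2.2.2.1, (ω.2.2.1, ω.2.2.2.1, ω.2.1, ω.2.2.2.2.2.2.1)))
        (ww2, (qq, ww1, b, (x2v, u2v)))
      = (∑ a', Ws (a', b)) * pQ qq * pW1 ww1 qq * pW2 ww2 qq * pXU2 (x2v, u2v) b ww2 qq := by
    intro ww2 qq ww1 b x2v u2v
    unfold mrg
    simp_rw [Fintype.sum_prod_type]
    simp only [hP, Prod.mk.injEq, ite_and, Finset.sum_ite_irrel, Finset.sum_const_zero,
      Finset.sum_ite_eq', Finset.mem_univ, if_true]
    simp only [← Finset.mul_sum, ← Finset.sum_mul, hch1, hXU11', hXU21', hW11, hW21, hQ1,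
      hWs1', mul_one, one_mul]
  have hM7 : ∀ x1v u1v x2v u2v qq,
      mrg P (fun ω => ((ω.2.2.2.2.2.1, ω.2.2.2.2.2.2.1), ω.2.2.1))
        (((x1v, u1v), (x2v, u2v)), qq)
      = pQ qq * (∑ a', ∑ b', ∑ w1', ∑ w2', Ws (a', b') * pW1 w1' qq * pW2 w2' qq * pXU1 (x1v, u1v) a' w1' qq * pXU2 (x2v, u2v) b' w2' qq) := by
    intro x1v u1v x2v u2v qq
    unfold mrg
    simp_rw [Fintype.sum_prod_type]
    simp only [hP, Prod.mk.injEq, ite_and, Finset.sum_ite_irrel, Finset.sum_const_zero,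
      Finset.sum_ite_eq', Finset.mem_univ, if_true]
    simp only [← Finset.mul_sum, ← Finset.sum_mul, hch1, hXU11', hXU21', hW11, hW21, hQ1,
      hWs1', mul_one, one_mul]
    simp_rw [show ∀ (a' : S1) (b' : S2) (w1' : W1) (w2' : W2),
        Ws (a', b') * pQ qq * pW1 w1' qq * pW2 w2' qq * pXU1 (x1v, u1v) a' w1' qq *
          pXU2 (x2v, u2v) b' w2' qq
        = pQ qq * (Ws (a', b') * pW1 w1' qq * pW2 w2' qq * pXU1 (x1v, u1v) a' w1' qq *
            pXU2 (x2v, u2v) b' w2' qq) from fun a' b' w1' w2' => by ring,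
      ← Finset.mul_sum]
  have hM8 : ∀ x1v u1v x2v u2v yy qq,
      mrg P (fun ω => ((ω.2.2.2.2.2.1, ω.2.2.2.2.2.2.1), ω.2.2.2.2.2.2.2, ω.2.2.1))
        (((x1v, u1v), (x2v, u2v)), yy, qq)
      = pQ qq * (∑ a', ∑ b', ∑ w1', ∑ w2', Ws (a', b') * pW1 w1' qq * pW2 w2' qq * pXU1 (x1v, u1v) a' w1' qq * pXU2 (x2v, u2v) b' w2' qq) * Wch yy (x1v, u1v) (x2v, u2v) := by
    intro x1v u1v x2v u2v yy qq
    unfold mrg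
    simp_rw [Fintype.sum_prod_type]
    simp only [hP, Prod.mk.injEq, ite_and, Finset.sum_ite_irrel, Finset.sum_const_zero,
      Finset.sum_ite_eq', Finset.mem_univ, if_true]
    simp only [← Finset.mul_sum, ← Finset.sum_mul, hch1, hXU11', hXU21', hW11, hW21, hQ1,
      hWs1', mul_one, one_mul]
    simp_rw [show ∀ (a' : S1) (b' : S2) (w1' : W1) (w2' : W2),
        Ws (a', b') * pQ qq * pW1 w1' qq * pW2 w2' qq * pXU1 (x1v, u1v) a' w1' qq *
          pXU2 (x2v, u2v) b' w2' qq
        = pQ qq * (Ws (a', b') * pW1 w1' qq * pW2 w2' qq * pXU1 (x1v, u1v) a' w1' qq *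
            pXU2 (x2v, u2v) b' w2' qq) from fun a' b' w1' w2' => by ring,
      ← Finset.mul_sum]
  letI dA : DecidableEq (S2 × X2 × U2) := inferInstance
  letI dB : DecidableEq (S1 × X1 × U1) := inferInstance
  letI dC : DecidableEq (Q × W1 × W2 × Y) := inferInstance
  letI dBC : DecidableEq ((S1 × X1 × U1) × Q × W1 × W2 × Y) := instDecidableEqProd
  letI dABC : DecidableEq ((S2 × X2 × U2) × (S1 × X1 × U1) × Q × W1 × W2 × Y) :=
    instDecidableEqProd
  have hM9 : ∀ a b qq ww1 ww2 x1v u1v x2v u2v yy,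
      mrg P (fun ω => ((ω.2.1, ω.2.2.2.2.2.2.1), (ω.1, ω.2.2.2.2.2.1),
          (ω.2.2.1, ω.2.2.2.1, ω.2.2.2.2.1, ω.2.2.2.2.2.2.2)))
        ((b, (x2v, u2v)), (a, (x1v, u1v)), (qq, ww1, ww2, yy))
      = Ws (a, b) * pQ qq * pW1 ww1 qq * pW2 ww2 qq * pXU1 (x1v, u1v) a ww1 qq *
          pXU2 (x2v, u2v) b ww2 qq * Wch yy (x1v, u1v) (x2v, u2v) := by
    intro a b qq ww1 ww2 x1v u1v x2v u2v yy
    unfold mrg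
    simp_rw [Fintype.sum_prod_type]
    simp only [hP, Prod.mk.injEq, ite_and, Finset.sum_ite_irrel, Finset.sum_const_zero,
      Finset.sum_ite_eq', Finset.mem_univ, if_true]
  -- fiber-equality pairs
  have p1 : ∀ qq ww1 ww2 yy,
      mrg P (fun ω => (ω.2.2.2.2.2.2.2, (ω.2.2.1, ω.2.2.2.1, ω.2.2.2.2.1)))
        (yy, (qq, ww1, ww2))
      = mrg P (fun ω => (ω.2.2.1, ω.2.2.2.1, ω.2.2.2.2.1, ω.2.2.2.2.2.2.2))
        (qq, ww1, ww2, yy) := fun qq ww1 ww2 yy =>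
    mrg_congr' P _ _ _ _ (fun ω' => by simp only [Prod.mk.injEq]; tauto)
  have p2 : ∀ a x1v u1v qq ww1 ww2 yy,
      mrg P (fun ω => ((ω.1, ω.2.2.2.2.2.1), ω.2.2.2.2.2.2.2,
          (ω.2.2.1, ω.2.2.2.1, ω.2.2.2.2.1)))
        ((a, (x1v, u1v)), yy, (qq, ww1, ww2))
      = mrg P (fun ω => ((ω.1, ω.2.2.2.2.2.1),
          (ω.2.2.1, ω.2.2.2.1, ω.2.2.2.2.1, ω.2.2.2.2.2.2.2)))
        ((a, (x1v, u1v)), (qq, ww1, ww2, yy)) := fun a x1v u1v qq ww1 ww2 yy =>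
    mrg_congr' P _ _ _ _ (fun ω' => by simp only [Prod.mk.injEq]; tauto)
  have p3 : ∀ ww1 b x2v u2v qq,
      mrg P (fun ω => ((ω.2.2.2.1, ω.2.1, ω.2.2.2.2.2.2.1), ω.2.2.1))
        ((ww1, b, (x2v, u2v)), qq)
      = mrg P (fun ω => (ω.2.2.1, ω.2.2.2.1, ω.2.1, ω.2.2.2.2.2.2.1))
        (qq, ww1, b, (x2v, u2v)) := fun ww1 b x2v u2v qq =>
    mrg_congr' P _ _ _ _ (fun ω' => by simp only [Prod.mk.injEq]; tauto)
  have p4 : ∀ ww1 b x2v u2v yy qq,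
      mrg P (fun ω => ((ω.2.2.2.1, ω.2.1, ω.2.2.2.2.2.2.1), ω.2.2.2.2.2.2.2, ω.2.2.1))
        ((ww1, b, (x2v, u2v)), yy, qq)
      = mrg P (fun ω => (ω.2.2.2.2.2.2.2, (ω.2.2.1, ω.2.2.2.1, ω.2.1, ω.2.2.2.2.2.2.1)))
        (yy, (qq, ww1, b, (x2v, u2v))) := fun ww1 b x2v u2v yy qq =>
    mrg_congr' P _ _ _ _ (fun ω' => by simp only [Prod.mk.injEq]; tauto)
  have p5 : ∀ b x2v u2v qq ww1 ww2 yy,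
      mrg P (fun ω => ((ω.2.1, ω.2.2.2.2.2.2.1),
          (ω.2.2.1, ω.2.2.2.1, ω.2.2.2.2.1, ω.2.2.2.2.2.2.2)))
        ((b, (x2v, u2v)), (qq, ww1, ww2, yy))
      = mrg P (fun ω => (ω.2.2.2.2.1, ω.2.2.2.2.2.2.2,
          (ω.2.2.1, ω.2.2.2.1, ω.2.1, ω.2.2.2.2.2.2.1)))
        (ww2, yy, (qq, ww1, b, (x2v, u2v))) := fun b x2v u2v qq ww1 ww2 yy =>
    mrg_congr' P _ _ _ _ (fun ω' => by simp only [Prod.mk.injEq]; tauto)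
  have hI1 : 0 ≤ cmi P (fun ω => (ω.2.1, ω.2.2.2.2.2.2.1)) (fun ω => (ω.1, ω.2.2.2.2.2.1))
      (fun ω => (ω.2.2.1, ω.2.2.2.1, ω.2.2.2.2.1, ω.2.2.2.2.2.2.2)) :=
    cmi_nonneg P hP0 _ _ _
  have hI2 : 0 ≤ cmi P (fun ω => ω.2.2.2.2.1) (fun ω => ω.2.2.2.2.2.2.2)
      (fun ω => (ω.2.2.1, ω.2.2.2.1, ω.2.1, ω.2.2.2.2.2.2.1)) :=
    cmi_nonneg P hP0 _ _ _
  have key : cmi P (fun ω => (ω.2.2.2.2.2.1, ω.2.2.2.2.2.2.1))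
        (fun ω => ω.2.2.2.2.2.2.2) (fun ω => ω.2.2.1)
      - cmi P (fun ω => (ω.1, ω.2.2.2.2.2.1)) (fun ω => ω.2.2.2.2.2.2.2)
        (fun ω => (ω.2.2.1, ω.2.2.2.1, ω.2.2.2.2.1))
      - cmi P (fun ω => (ω.2.2.2.1, ω.2.1, ω.2.2.2.2.2.2.1))
        (fun ω => ω.2.2.2.2.2.2.2) (fun ω => ω.2.2.1)
      + mi P (fun ω => ω.1) (fun ω => ω.2.1)
      - cmi P (fun ω => (ω.2.1, ω.2.2.2.2.2.2.1)) (fun ω => (ω.1, ω.2.2.2.2.2.1))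
        (fun ω => (ω.2.2.1, ω.2.2.2.1, ω.2.2.2.2.1, ω.2.2.2.2.2.2.2))
      - cmi P (fun ω => ω.2.2.2.2.1) (fun ω => ω.2.2.2.2.2.2.2)
        (fun ω => (ω.2.2.1, ω.2.2.2.1, ω.2.1, ω.2.2.2.2.2.2.1)) = 0 := by
    unfold cmi mi
    simp only [pEnt_eq_sum]
    simp only [← Finset.sum_add_distrib, ← Finset.sum_sub_distrib]
    refine Finset.sum_eq_zero fun ω _ => ?_
    obtain ⟨a, b, qq, ww1, ww2, z1v, z2v, yy⟩ := ω
    obtain ⟨x1v, u1v⟩ := z1v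
    obtain ⟨x2v, u2v⟩ := z2v
    dsimp only
    rcases (hP0 (a, b, qq, ww1, ww2, (x1v, u1v), (x2v, u2v), yy)).eq_or_lt with h0 | h0
    · rw [← h0]; ring
    · rw [p1 qq ww1 ww2 yy, p2 a x1v u1v qq ww1 ww2 yy, p3 ww1 b x2v u2v qq,
        p4 ww1 b x2v u2v yy qq, p5 b x2v u2v qq ww1 ww2 yy,
        hM1 a, hM2 b, hM3 a b, hM4 qq ww1 ww2, hM5 a x1v u1v qq ww1 ww2,
        hM6 ww2 qq ww1 b x2v u2v, hM7 x1v u1v x2v u2v qq, hM8 x1v u1v x2v u2v yy qq,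
        hM9 a b qq ww1 ww2 x1v u1v x2v u2v yy]
      rw [hP] at h0
      have n1 : 0 ≤ Ws (a, b) := hWs0 _
      have n2 : 0 ≤ pQ qq := hQ0 _
      have n3 : 0 ≤ pW1 ww1 qq := hW10 _ _
      have n4 : 0 ≤ pW2 ww2 qq := hW20 _ _
      have n5 : 0 ≤ pXU1 (x1v, u1v) a ww1 qq := hXU10 _ _ _ _
      have n6 : 0 ≤ pXU2 (x2v, u2v) b ww2 qq := hXU20 _ _ _ _
      have n7 : 0 ≤ Wch yy (x1v, u1v) (x2v, u2v) := hch0 _ _ _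
      have m1 : 0 ≤ Ws (a, b) * pQ qq := mul_nonneg n1 n2
      have m2 : 0 ≤ Ws (a, b) * pQ qq * pW1 ww1 qq := mul_nonneg m1 n3
      have m3 : 0 ≤ Ws (a, b) * pQ qq * pW1 ww1 qq * pW2 ww2 qq := mul_nonneg m2 n4
      have m4 : 0 ≤ Ws (a, b) * pQ qq * pW1 ww1 qq * pW2 ww2 qq *
          pXU1 (x1v, u1v) a ww1 qq := mul_nonneg m3 n5
      have m5 : 0 ≤ Ws (a, b) * pQ qq * pW1 ww1 qq * pW2 ww2 qq *
          pXU1 (x1v, u1v) a ww1 qq * pXU2 (x2v, u2v) b ww2 qq := mul_nonneg m4 n6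
      have q6 := pos_left m5 n7 h0
      have hA7 := pos_right m5 n7 h0
      have q5 := pos_left m4 n6 q6
      have hA6 := pos_right m4 n6 q6
      have q4 := pos_left m3 n5 q5
      have hA5 := pos_right m3 n5 q5
      have q3 := pos_left m2 n4 q4
      have hA4 := pos_right m2 n4 q4
      have q2 := pos_left m1 n3 q3
      have hA3 := pos_right m1 n3 q3
      have hA1 := pos_left n1 n2 q2
      have hA2 := pos_right n1 n2 q2
      have hB1 : 0 < ∑ b', Ws (a, b') := lt_of_lt_of_le hA1
        (Finset.single_le_sum (f := fun b' => Ws (a, b')) (fun b' _ => hWs0 _)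
          (Finset.mem_univ b))
      have hB2 : 0 < ∑ a', Ws (a', b) := lt_of_lt_of_le hA1
        (Finset.single_le_sum (f := fun a' => Ws (a', b)) (fun a' _ => hWs0 _)
          (Finset.mem_univ a))
      have hTnn : ∀ a' b' w1' w2', 0 ≤ Ws (a', b') * pW1 w1' qq * pW2 w2' qq *
          pXU1 (x1v, u1v) a' w1' qq * pXU2 (x2v, u2v) b' w2' qq := fun a' b' w1' w2' =>
        mul_nonneg (mul_nonneg (mul_nonneg (mul_nonneg (hWs0 _) (hW10 _ _)) (hW20 _ _))
          (hXU10 _ _ _ _)) (hXU20 _ _ _ _)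
      have hT : 0 < Ws (a, b) * pW1 ww1 qq * pW2 ww2 qq * pXU1 (x1v, u1v) a ww1 qq *
          pXU2 (x2v, u2v) b ww2 qq :=
        mul_pos (mul_pos (mul_pos (mul_pos hA1 hA3) hA4) hA5) hA6
      have k1 : 0 < ∑ w2', Ws (a, b) * pW1 ww1 qq * pW2 w2' qq *
          pXU1 (x1v, u1v) a ww1 qq * pXU2 (x2v, u2v) b w2' qq :=
        Finset.sum_pos' (fun w2' _ => hTnn a b ww1 w2') ⟨ww2, Finset.mem_univ ww2, hT⟩
      have k2 : 0 < ∑ w1', ∑ w2', Ws (a, b) * pW1 w1' qq * pW2 w2' qq *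
          pXU1 (x1v, u1v) a w1' qq * pXU2 (x2v, u2v) b w2' qq :=
        Finset.sum_pos' (fun w1' _ => Finset.sum_nonneg fun w2' _ => hTnn a b w1' w2')
          ⟨ww1, Finset.mem_univ ww1, k1⟩
      have k3 : 0 < ∑ b', ∑ w1', ∑ w2', Ws (a, b') * pW1 w1' qq * pW2 w2' qq *
          pXU1 (x1v, u1v) a w1' qq * pXU2 (x2v, u2v) b' w2' qq :=
        Finset.sum_pos' (fun b' _ => Finset.sum_nonneg fun w1' _ =>
          Finset.sum_nonneg fun w2' _ => hTnn a b' w1' w2') ⟨b, Finset.mem_univ b, k2⟩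
      have hK : 0 < ∑ a', ∑ b', ∑ w1', ∑ w2', Ws (a', b') * pW1 w1' qq * pW2 w2' qq * pXU1 (x1v, u1v) a' w1' qq * pXU2 (x2v, u2v) b' w2' qq :=
        Finset.sum_pos' (fun a' _ => Finset.sum_nonneg fun b' _ =>
          Finset.sum_nonneg fun w1' _ => Finset.sum_nonneg fun w2' _ => hTnn a' b' w1' w2')
          ⟨a, Finset.mem_univ a, k3⟩
      have c1 := mul_pos hB1 hA2
      have c2 := mul_pos c1 hA3
      have c3 := mul_pos c2 hA4
      have d1 := mul_pos hB2 hA2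
      have d2 := mul_pos d1 hA3
      have d3 := mul_pos d2 hA4
      have g1 := mul_pos hA1 hA2
      have g2 := mul_pos g1 hA3
      have g3 := mul_pos g2 hA4
      have g4 := mul_pos g3 hA5
      have g5 := mul_pos g4 hA6
      have e4 : Real.log (pQ qq * pW1 ww1 qq * pW2 ww2 qq)
          = Real.log (pQ qq) + Real.log (pW1 ww1 qq) + Real.log (pW2 ww2 qq) := by
        rw [Real.log_mul (mul_pos hA2 hA3).ne' hA4.ne', Real.log_mul hA2.ne' hA3.ne']
      have e5 : Real.log ((∑ b', Ws (a, b')) * pQ qq * pW1 ww1 qq * pW2 ww2 qq *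
            pXU1 (x1v, u1v) a ww1 qq)
          = Real.log (∑ b', Ws (a, b')) + Real.log (pQ qq) + Real.log (pW1 ww1 qq)
            + Real.log (pW2 ww2 qq) + Real.log (pXU1 (x1v, u1v) a ww1 qq) := by
        rw [Real.log_mul c3.ne' hA5.ne', Real.log_mul c2.ne' hA4.ne',
          Real.log_mul c1.ne' hA3.ne', Real.log_mul hB1.ne' hA2.ne']
      have e6 : Real.log ((∑ a', Ws (a', b)) * pQ qq * pW1 ww1 qq * pW2 ww2 qq *
            pXU2 (x2v, u2v) b ww2 qq)
          = Real.log (∑ a', Ws (a', b)) + Real.log (pQ qq) + Real.log (pW1 ww1 qq)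
            + Real.log (pW2 ww2 qq) + Real.log (pXU2 (x2v, u2v) b ww2 qq) := by
        rw [Real.log_mul d3.ne' hA6.ne', Real.log_mul d2.ne' hA4.ne',
          Real.log_mul d1.ne' hA3.ne', Real.log_mul hB2.ne' hA2.ne']
      have e7 : Real.log (pQ qq * (∑ a', ∑ b', ∑ w1', ∑ w2', Ws (a', b') * pW1 w1' qq * pW2 w2' qq * pXU1 (x1v, u1v) a' w1' qq * pXU2 (x2v, u2v) b' w2' qq))
          = Real.log (pQ qq) + Real.log (∑ a', ∑ b', ∑ w1', ∑ w2', Ws (a', b') * pW1 w1' qq * pW2 w2' qq * pXU1 (x1v, u1v) a' w1' qq * pXU2 (x2v, u2v) b' w2' qq) :=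
        Real.log_mul hA2.ne' hK.ne'
      have e8 : Real.log (pQ qq * (∑ a', ∑ b', ∑ w1', ∑ w2', Ws (a', b') * pW1 w1' qq * pW2 w2' qq * pXU1 (x1v, u1v) a' w1' qq * pXU2 (x2v, u2v) b' w2' qq) * Wch yy (x1v, u1v) (x2v, u2v))
          = Real.log (pQ qq) + Real.log (∑ a', ∑ b', ∑ w1', ∑ w2', Ws (a', b') * pW1 w1' qq * pW2 w2' qq * pXU1 (x1v, u1v) a' w1' qq * pXU2 (x2v, u2v) b' w2' qq)
            + Real.log (Wch yy (x1v, u1v) (x2v, u2v)) := by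
        rw [Real.log_mul (mul_pos hA2 hK).ne' hA7.ne', Real.log_mul hA2.ne' hK.ne']
      have e9 : Real.log (Ws (a, b) * pQ qq * pW1 ww1 qq * pW2 ww2 qq *
            pXU1 (x1v, u1v) a ww1 qq * pXU2 (x2v, u2v) b ww2 qq *
            Wch yy (x1v, u1v) (x2v, u2v))
          = Real.log (Ws (a, b)) + Real.log (pQ qq) + Real.log (pW1 ww1 qq)
            + Real.log (pW2 ww2 qq) + Real.log (pXU1 (x1v, u1v) a ww1 qq)
            + Real.log (pXU2 (x2v, u2v) b ww2 qq)
            + Real.log (Wch yy (x1v, u1v) (x2v, u2v)) := by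
        rw [Real.log_mul g5.ne' hA7.ne', Real.log_mul g4.ne' hA6.ne',
          Real.log_mul g3.ne' hA5.ne', Real.log_mul g2.ne' hA4.ne',
          Real.log_mul g1.ne' hA3.ne', Real.log_mul hA1.ne' hA2.ne']
      rw [e4, e5, e6, e7, e8, e9]
      ring
  linarith [hI1, hI2, key]
end
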